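/- arXiv:2210.12913 — 9 statements merged into one kernel-verified Lean document; each statement's English description precedes it below -/
import Mathlib

section
/- Define U : ℕ × ℕ → ℤ by U(i,j) = 1 if C(j,i) is odd and 0 otherwise. Then for every n ≥ 1 and every m ≥ 0, the n×n submatrix (U(i, m+j))_{0≤i,j<n} of U, consisting of n consecutive columns starting at column m and the first n rows, has determinant 1 or −1 (computed in ℤ). -/
def U (i j : ℕ) : ℤ := if Odd (Nat.choose j i) then 1 else 0

lemma lucas2 (N K : ℕ) : Odd (N.choose K) ↔ Odd ((N % 2).choose (K % 2)) ∧ Odd ((N / 2).choose (K / 2)) := by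
  have h := @Choose.choose_modEq_choose_mod_mul_choose_div_nat N K 2 ⟨Nat.prime_two⟩
  rw [Nat.ModEq] at h
  rw [Nat.odd_iff, Nat.odd_iff, Nat.odd_iff, h, Nat.mul_mod]
  constructor
  · intro hh
    constructor <;> by_contra hc <;> simp [Nat.mod_two_ne_one] at hc <;> simp [hc] at hh
  · rintro ⟨h1, h2⟩; simp [h1, h2]

lemma U_ee (a c : ℕ) : U (2*a) (2*c) = U a c := by
  unfold U
  have := lucas2 (2*c) (2*a)
  simp only [Nat.mul_mod_right, Nat.mul_div_cancel_left _ (by norm_num : 0 < 2)] at this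
  simp only [this]; simp
lemma U_eo (a c : ℕ) : U (2*a) (2*c+1) = U a c := by
  unfold U
  have := lucas2 (2*c+1) (2*a)
  have h1 : (2*c+1) % 2 = 1 := by omega
  have h2 : (2*c+1) / 2 = c := by omega
  simp only [h1, h2, Nat.mul_mod_right, Nat.mul_div_cancel_left _ (by norm_num : 0 < 2)] at this
  simp only [this]; simp
lemma U_oe (a c : ℕ) : U (2*a+1) (2*c) = 0 := by
  unfold U
  have := lucas2 (2*c) (2*a+1)
  have h3 : (2*a+1) % 2 = 1 := by omega
  simp only [h3, Nat.mul_mod_right] at this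
  simp only [this]; simp [Nat.choose_eq_zero_of_lt]
lemma U_oo (a c : ℕ) : U (2*a+1) (2*c+1) = U a c := by
  unfold U
  have := lucas2 (2*c+1) (2*a+1)
  have h1 : (2*c+1) % 2 = 1 := by omega
  have h2 : (2*c+1) / 2 = c := by omega
  have h3 : (2*a+1) % 2 = 1 := by omega
  have h4 : (2*a+1) / 2 = a := by omega
  simp only [h1, h2, h3, h4] at this
  simp only [this]; simp
lemma U_zero (c : ℕ) : U 0 c = 1 := by simp [U]

/-- interleave: inl a ↦ 2a, inr b ↦ 2b+1 -/
def ileave (n : ℕ) : (Fin ((n+1)/2) ⊕ Fin (n/2)) ≃ Fin n where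
  toFun := Sum.elim (fun a => ⟨2*a, by omega⟩) (fun b => ⟨2*b+1, by omega⟩)
  invFun i := if h : (i : ℕ) % 2 = 0 then Sum.inl ⟨(i:ℕ)/2, by omega⟩ else Sum.inr ⟨(i:ℕ)/2, by omega⟩
  left_inv := by
    rintro (a | b) <;> dsimp only [Sum.elim_inl, Sum.elim_inr]
    · rw [dif_pos (by omega)]
      exact congrArg _ (Fin.ext (by simp only [Fin.val_mk]; omega))
    · rw [dif_neg (by omega)]
      exact congrArg _ (Fin.ext (by simp only [Fin.val_mk]; omega))
  right_inv := by
    intro i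
    dsimp only
    by_cases h : (i : ℕ) % 2 = 0
    · rw [dif_pos h]; exact Fin.ext (by simp only [Sum.elim_inl, Fin.val_mk]; omega)
    · rw [dif_neg h]; exact Fin.ext (by simp only [Sum.elim_inr, Fin.val_mk]; omega)

/-- rows for odd m: inl r ↦ min (2r+1) (n-1), inr a ↦ 2a -/
def rowEqO (n : ℕ) (hn : 1 ≤ n) : (Fin ((n+1)/2) ⊕ Fin (n/2)) ≃ Fin n where
  toFun := Sum.elim (fun r => ⟨min (2*(r:ℕ)+1) (n-1), by omega⟩) (fun a => ⟨2*a, by omega⟩)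
  invFun i := if (i : ℕ) % 2 = 1 then Sum.inl ⟨(i:ℕ)/2, by omega⟩
    else if h : (i:ℕ)+1 = n then Sum.inl ⟨(i:ℕ)/2, by omega⟩ else Sum.inr ⟨(i:ℕ)/2, by omega⟩
  left_inv := by
    rintro (r | a) <;> dsimp only [Sum.elim_inl, Sum.elim_inr]
    · by_cases h : 2*(r:ℕ)+1 ≤ n-1
      · have h1 : min (2*(r:ℕ)+1) (n-1) = 2*(r:ℕ)+1 := by omega
        simp only [h1]
        rw [if_pos (by omega)]
        exact congrArg _ (Fin.ext (by simp only [Fin.val_mk]; omega))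
      · have hr := r.isLt
        have h1 : min (2*(r:ℕ)+1) (n-1) = n-1 := by omega
        have h2 : 2*(r:ℕ) = n-1 := by omega
        simp only [h1]
        rw [if_neg (by omega), dif_pos (by omega)]
        exact congrArg _ (Fin.ext (by simp only [Fin.val_mk]; omega))
    · have ha := a.isLt
      rw [if_neg (by omega), dif_neg (by omega)]
      exact congrArg _ (Fin.ext (by simp only [Fin.val_mk]; omega))
  right_inv := by
    intro i
    have hi := i.isLt
    dsimp only
    by_cases h : (i : ℕ) % 2 = 1
    · rw [if_pos h]
      exact Fin.ext (by simp only [Sum.elim_inl, Fin.val_mk]; omega)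
    · rw [if_neg h]
      by_cases h2 : (i:ℕ)+1 = n
      · rw [dif_pos h2]; exact Fin.ext (by simp only [Sum.elim_inl, Fin.val_mk]; omega)
      · rw [dif_neg h2]; exact Fin.ext (by simp only [Sum.elim_inr, Fin.val_mk]; omega)

@[simp] lemma ileave_inl (n : ℕ) (a) : ((ileave n (Sum.inl a) : Fin n) : ℕ) = 2*(a:ℕ) := rfl
@[simp] lemma ileave_inr (n : ℕ) (b) : ((ileave n (Sum.inr b) : Fin n) : ℕ) = 2*(b:ℕ)+1 := rfl
@[simp] lemma rowEqO_inl (n : ℕ) (hn) (r) : ((rowEqO n hn (Sum.inl r) : Fin n) : ℕ) = min (2*(r:ℕ)+1) (n-1) := rfl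
@[simp] lemma rowEqO_inr (n : ℕ) (hn) (a) : ((rowEqO n hn (Sum.inr a) : Fin n) : ℕ) = 2*(a:ℕ) := rfl

def Emat (n : ℕ) : Matrix (Fin n) (Fin n) ℤ :=
  Matrix.of fun i k => (if k = i then 1 else 0) +
    (if (i:ℕ) % 2 = 0 ∧ (k:ℕ) = (i:ℕ)+1 then -1 else 0)

lemma Emat_det (n : ℕ) : (Emat n).det = 1 := by
  have ht : (Emat n).BlockTriangular id := by
    intro i j hij
    simp only [id] at hij
    simp only [Emat, Matrix.of_apply]
    rw [if_neg (by intro h; subst h; exact absurd rfl (ne_of_lt hij)),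
        if_neg (by rintro ⟨-, h⟩; have := Fin.lt_iff_val_lt_val.mp hij; omega)]
    ring
  rw [Matrix.det_of_upperTriangular ht]
  apply Finset.prod_eq_one
  intro i _
  simp only [Emat, Matrix.of_apply]
  have hne : ¬((i:ℕ) % 2 = 0 ∧ (i:ℕ) = (i:ℕ)+1) := by rintro ⟨-, h⟩; omega
  simp [hne]

lemma Emat_mul_apply {n : ℕ} (M : Matrix (Fin n) (Fin n) ℤ) (i j : Fin n) :
    (Emat n * M) i j = M i j +
      (if h : (i:ℕ) % 2 = 0 ∧ (i:ℕ)+1 < n then -(M ⟨(i:ℕ)+1, h.2⟩ j) else 0) := by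
  rw [Matrix.mul_apply]
  have hsplit : ∀ k : Fin n, Emat n i k * M k j =
      (if k = i then M k j else 0) +
      (if ((i:ℕ) % 2 = 0 ∧ (k:ℕ) = (i:ℕ)+1) then -(M k j) else 0) := by
    intro k
    simp only [Emat, Matrix.of_apply]
    split_ifs <;> ring
  rw [Finset.sum_congr rfl (fun k _ => hsplit k), Finset.sum_add_distrib]
  congr 1
  · simp
  · by_cases h : (i:ℕ) % 2 = 0 ∧ (i:ℕ)+1 < n
    · rw [dif_pos h]
      rw [Finset.sum_eq_single (⟨(i:ℕ)+1, h.2⟩ : Fin n)]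
      · rw [if_pos ⟨h.1, rfl⟩]
      · intro b _ hb
        rw [if_neg]
        rintro ⟨-, hb2⟩
        exact hb (Fin.ext hb2)
      · intro hmem; exact absurd (Finset.mem_univ _) hmem
    · rw [dif_neg h]
      apply Finset.sum_eq_zero
      intro k _
      rw [if_neg]
      rintro ⟨h1, h2⟩
      exact h ⟨h1, h2 ▸ k.isLt⟩

lemma isUnit_det_of_submatrix {k n : Type*} [DecidableEq k] [Fintype k] [DecidableEq n] [Fintype n]
    (M : Matrix n n ℤ) (σ τ : k ≃ n) (h : IsUnit (M.submatrix σ τ).det) : IsUnit M.det := by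
  have heq : M.submatrix σ τ = (M.submatrix τ τ).submatrix (σ.trans τ.symm) id := by
    ext i j
    simp [Matrix.submatrix_apply]
  rw [heq] at h
  have := Matrix.det_permute (σ.trans τ.symm) (M.submatrix τ τ)
  rw [show ((σ.trans τ.symm : Equiv.Perm k) : k → k) = ⇑(σ.trans τ.symm) from rfl] at this
  rw [this, Matrix.det_submatrix_equiv_self] at h
  exact isUnit_of_mul_isUnit_right h

lemma key (n : ℕ) : ∀ m : ℕ, IsUnit ((Matrix.of fun i j : Fin n => U i (m + j)).det) := by
  induction n using Nat.strong_induction_on with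
  | _ n ih =>
  intro m
  rcases Nat.lt_or_ge n 2 with h2 | h2
  · interval_cases n
    · simp
    · rw [Matrix.det_fin_one]
      simp only [Matrix.of_apply]
      have : ((0 : Fin 1) : ℕ) = 0 := rfl
      rw [this, Nat.add_zero, U_zero]
      exact isUnit_one
  · set M : Matrix (Fin n) (Fin n) ℤ := Matrix.of fun i j : Fin n => U i (m + j) with hM
    suffices hEM : IsUnit ((Emat n * M).det) by
      rwa [Matrix.det_mul, Emat_det, one_mul] at hEM
    have hh : (n+1)/2 < n := by omega
    have hl : n/2 < n := by omega
    rcases Nat.even_or_odd' m with ⟨m', hm | hm⟩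
    · -- m = 2*m' : rows and cols both by ileave
      apply isUnit_det_of_submatrix (Emat n * M) (ileave n) (ileave n)
      set N := (Emat n * M).submatrix (ileave n) (ileave n) with hN
      have h11 : N.toBlocks₁₁ = Matrix.of fun i j : Fin ((n+1)/2) => U i (m' + j) := by
        ext a j
        simp only [Matrix.toBlocks₁₁, Matrix.of_apply, Matrix.submatrix_apply, hN]
        rw [Emat_mul_apply]
        have hrow : ((ileave n (Sum.inl a) : Fin n) : ℕ) = 2*(a:ℕ) := rfl
        have hcol : m + ((ileave n (Sum.inl j) : Fin n) : ℕ) = 2*(m' + (j:ℕ)) := by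
          rw [ileave_inl]; omega
        simp only [hM, Matrix.of_apply, hrow, hcol]
        rw [U_ee]
        by_cases hlt : 2*(a:ℕ)+1 < n
        · rw [dif_pos ⟨by omega, hlt⟩]
          rw [U_oe]
          ring
        · rw [dif_neg (by rintro ⟨-, hc⟩; exact hlt hc)]
          ring
      have h21 : N.toBlocks₂₁ = 0 := by
        ext b j
        simp only [Matrix.toBlocks₂₁, Matrix.of_apply, Matrix.submatrix_apply, hN, Matrix.zero_apply]
        rw [Emat_mul_apply]
        have hrow : ((ileave n (Sum.inr b) : Fin n) : ℕ) = 2*(b:ℕ)+1 := rfl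
        have hcol : m + ((ileave n (Sum.inl j) : Fin n) : ℕ) = 2*(m' + (j:ℕ)) := by
          rw [ileave_inl]; omega
        simp only [hM, Matrix.of_apply, hrow, hcol]
        rw [U_oe]
        rw [dif_neg (by rintro ⟨hpar, -⟩; omega)]
        ring
      have h22 : N.toBlocks₂₂ = Matrix.of fun i j : Fin (n/2) => U i (m' + j) := by
        ext b j
        simp only [Matrix.toBlocks₂₂, Matrix.of_apply, Matrix.submatrix_apply, hN]
        rw [Emat_mul_apply]
        have hrow : ((ileave n (Sum.inr b) : Fin n) : ℕ) = 2*(b:ℕ)+1 := rfl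
        have hcol : m + ((ileave n (Sum.inr j) : Fin n) : ℕ) = 2*(m' + (j:ℕ))+1 := by
          rw [ileave_inr]; omega
        simp only [hM, Matrix.of_apply, hrow, hcol]
        rw [U_oo]
        rw [dif_neg (by rintro ⟨hpar, -⟩; omega)]
        ring
      have hdet : N.det = (Matrix.of fun i j : Fin ((n+1)/2) => U i (m' + j)).det *
          (Matrix.of fun i j : Fin (n/2) => U i (m' + j)).det := by
        conv_lhs => rw [← Matrix.fromBlocks_toBlocks N, h11, h21, h22]
        rw [Matrix.det_fromBlocks_zero₂₁]
      rw [hdet]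
      exact (ih _ hh m').mul (ih _ hl m')
    · -- m = 2*m'+1 : rows by rowEqO, cols by ileave
      apply isUnit_det_of_submatrix (Emat n * M) (rowEqO n (by omega)) (ileave n)
      set N := (Emat n * M).submatrix (rowEqO n (by omega)) (ileave n) with hN
      have h11 : N.toBlocks₁₁ = Matrix.of fun i j : Fin ((n+1)/2) => U i (m' + j) := by
        ext r j
        simp only [Matrix.toBlocks₁₁, Matrix.of_apply, Matrix.submatrix_apply, hN]
        rw [Emat_mul_apply]
        have hcol : m + ((ileave n (Sum.inl j) : Fin n) : ℕ) = 2*(m' + (j:ℕ))+1 := by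
          rw [ileave_inl]; omega
        have hr := r.isLt
        by_cases hcase : 2*(r:ℕ)+1 ≤ n-1
        · have hrow : ((rowEqO n (by omega) (Sum.inl r) : Fin n) : ℕ) = 2*(r:ℕ)+1 := by
            rw [rowEqO_inl]; omega
          simp only [hM, Matrix.of_apply, hrow, hcol]
          rw [U_oo]
          rw [dif_neg (by rintro ⟨hpar, -⟩; omega)]
          ring
        · have h2r : 2*(r:ℕ) = n-1 := by omega
          have hrow : ((rowEqO n (by omega) (Sum.inl r) : Fin n) : ℕ) = 2*(r:ℕ) := by
            rw [rowEqO_inl]; omega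
          simp only [hM, Matrix.of_apply, hrow, hcol]
          rw [U_eo]
          rw [dif_neg (by rintro ⟨-, hc⟩; omega)]
          ring
      have h21 : N.toBlocks₂₁ = 0 := by
        ext a j
        simp only [Matrix.toBlocks₂₁, Matrix.of_apply, Matrix.submatrix_apply, hN, Matrix.zero_apply]
        rw [Emat_mul_apply]
        have ha := a.isLt
        have hrow : ((rowEqO n (by omega) (Sum.inr a) : Fin n) : ℕ) = 2*(a:ℕ) := rfl
        have hcol : m + ((ileave n (Sum.inl j) : Fin n) : ℕ) = 2*(m' + (j:ℕ))+1 := by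
          rw [ileave_inl]; omega
        simp only [hM, Matrix.of_apply, hrow, hcol]
        rw [U_eo]
        rw [dif_pos ⟨by omega, by omega⟩]
        rw [U_oo]
        ring
      have h22 : N.toBlocks₂₂ = Matrix.of fun i j : Fin (n/2) => U i ((m'+1) + j) := by
        ext a j
        simp only [Matrix.toBlocks₂₂, Matrix.of_apply, Matrix.submatrix_apply, hN]
        rw [Emat_mul_apply]
        have ha := a.isLt
        have hrow : ((rowEqO n (by omega) (Sum.inr a) : Fin n) : ℕ) = 2*(a:ℕ) := rfl
        have hcol : m + ((ileave n (Sum.inr j) : Fin n) : ℕ) = 2*((m'+1) + (j:ℕ)) := by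
          rw [ileave_inr]; omega
        simp only [hM, Matrix.of_apply, hrow, hcol]
        rw [U_ee]
        rw [dif_pos ⟨by omega, by omega⟩]
        rw [U_oe]
        ring
      have hdet : N.det = (Matrix.of fun i j : Fin ((n+1)/2) => U i (m' + j)).det *
          (Matrix.of fun i j : Fin (n/2) => U i ((m'+1) + j)).det := by
        conv_lhs => rw [← Matrix.fromBlocks_toBlocks N, h11, h21, h22]
        rw [Matrix.det_fromBlocks_zero₂₁]
      rw [hdet]
      exact (ih _ hh m').mul (ih _ hl (m'+1))

theorem main_theorem (n m : ℕ) (hn : 1 ≤ n) :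
    (Matrix.of fun i j : Fin n => U i (m + j)).det = 1 ∨
    (Matrix.of fun i j : Fin n => U i (m + j)).det = -1 := by
  exact Int.isUnit_iff.mp (key n m)
end

section
/- Define U : ℕ × ℕ → ℤ by U(i,j) = 1 if C(j,i) is odd and 0 otherwise. Let 2^{k−1} < n ≤ 2^k and 0 ≤ m < 2^{k−1}. Then det((U(i, m+j))_{0≤i,j<n}) = (−1)^{n−2^{k−1}} · det((U(i, m+2^{k−1}+j))_{0≤i,j<n}). -/
/-! Write `N = 2 ^ (k - 1)`. By Lucas's theorem, `U i (c + N * d) = U (i % N) c * U (i / N) d`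
for `c < N`, so shifting the column index by `N` leaves the rows `i < N` of `U` unchanged, while
for `N ≤ i < 2N` it flips the parity factor `U 1 d`, turning row `i` into row `i - N` minus row `i`.
Hence the shifted matrix is `M * A` for a lower triangular `M` whose diagonal has `N` entries `1`
and `n - N` entries `-1`. -/

theorem Choose.choose_add_pow_mul_modEq {p e a b c s : ℕ} [Fact p.Prime]
    (hc : c < p ^ e) (hs : s < p ^ e) :
    (c + p ^ e * a).choose (s + p ^ e * b) ≡ c.choose s * a.choose b [MOD p] := by
  induction e generalizing c s with
  | zero => simp_all [Nat.ModEq.refl]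
  | succ e ih =>
    have hp : 0 < p := Nat.Prime.pos Fact.out
    have hdigits : ∀ x y, (x + p ^ (e + 1) * y) % p = x % p ∧
        (x + p ^ (e + 1) * y) / p = x / p + p ^ e * y := fun x y => by
      rw [pow_succ, mul_comm (p ^ e), mul_assoc, Nat.add_mul_mod_self_left,
        Nat.add_mul_div_left _ _ hp]
      exact ⟨rfl, rfl⟩
    obtain ⟨hcmod, hcdiv⟩ := hdigits c a
    obtain ⟨hsmod, hsdiv⟩ := hdigits s b
    rw [pow_succ'] at hc hs
    calc (c + p ^ (e + 1) * a).choose (s + p ^ (e + 1) * b)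
        ≡ (c % p).choose (s % p) * (c / p + p ^ e * a).choose (s / p + p ^ e * b) [MOD p] := by
          rw [← hcmod, ← hcdiv, ← hsmod, ← hsdiv]
          exact Choose.choose_modEq_choose_mod_mul_choose_div_nat
      _ ≡ (c % p).choose (s % p) * ((c / p).choose (s / p) * a.choose b) [MOD p] :=
          (ih (Nat.div_lt_of_lt_mul hc) (Nat.div_lt_of_lt_mul hs)).mul_left _
      _ ≡ c.choose s * a.choose b [MOD p] := by
          rw [← mul_assoc]
          exact Choose.choose_modEq_choose_mod_mul_choose_div_nat.symm.mul_right _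

theorem Nat.odd_choose_add_two_pow_mul_iff {e a b c s : ℕ} (hc : c < 2 ^ e) (hs : s < 2 ^ e) :
    Odd ((c + 2 ^ e * a).choose (s + 2 ^ e * b)) ↔ Odd (c.choose s) ∧ Odd (a.choose b) := by
  have := Fact.mk Nat.prime_two
  rw [Nat.odd_iff, Choose.choose_add_pow_mul_modEq hc hs, ← Nat.odd_iff, Nat.odd_mul]

theorem U_add_two_pow_mul {e i c d : ℕ} (hc : c < 2 ^ e) :
    U i (c + 2 ^ e * d) = U (i % 2 ^ e) c * U (i / 2 ^ e) d := by
  have h := Nat.odd_choose_add_two_pow_mul_iff (a := d) (b := i / 2 ^ e) hc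
    (Nat.mod_lt i (by positivity))
  rw [Nat.mod_add_div] at h
  simp only [U, h]
  split_ifs <;> simp_all

theorem U_zero_left (d : ℕ) : U 0 d = 1 := by simp [U]

theorem U_one_left_add_one (d : ℕ) : U 1 (d + 1) = 1 - U 1 d := by
  simp only [U, Nat.choose_one_right, Nat.odd_add_one]
  split_ifs <;> simp

theorem U_add_two_pow_of_lt {e i : ℕ} (hi : i < 2 ^ e) (x : ℕ) : U i (x + 2 ^ e) = U i x := by
  have hx := Nat.mod_lt x (show 0 < 2 ^ e by positivity)
  rw [← Nat.mod_add_div x (2 ^ e), add_assoc, ← mul_add_one, U_add_two_pow_mul hx,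
    U_add_two_pow_mul hx, Nat.div_eq_of_lt hi, U_zero_left, U_zero_left]

theorem U_add_two_pow_of_le {e i : ℕ} (hi₁ : 2 ^ e ≤ i) (hi₂ : i < 2 ^ (e + 1)) (x : ℕ) :
    U i (x + 2 ^ e) = U (i - 2 ^ e) x - U i x := by
  have hx := Nat.mod_lt x (show 0 < 2 ^ e by positivity)
  rw [pow_succ] at hi₂
  have hlow : i - 2 ^ e < 2 ^ e := by omega
  have hdiv : i / 2 ^ e = 1 := Nat.div_eq_of_lt_le (by omega) (by omega)
  have hmod : i % 2 ^ e = i - 2 ^ e := by rw [Nat.mod_eq_sub_mod hi₁, Nat.mod_eq_of_lt hlow]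
  rw [← Nat.mod_add_div x (2 ^ e), add_assoc, ← mul_add_one, U_add_two_pow_mul hx,
    U_add_two_pow_mul hx, U_add_two_pow_mul hx, hdiv, hmod, Nat.div_eq_of_lt hlow,
    Nat.mod_eq_of_lt hlow, U_zero_left, U_one_left_add_one]
  ring

open Finset

namespace Matrix

variable {R : Type*} [CommRing R] {n N : ℕ}

def shiftRowsSub (n N : ℕ) : Matrix (Fin n) (Fin n) R :=
  of fun i l => if l = i then (if (i : ℕ) < N then 1 else -1) else if (l : ℕ) + N = i then 1 else 0

theorem isLowerTriangular_shiftRowsSub :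
    (shiftRowsSub n N : Matrix (Fin n) (Fin n) R).IsLowerTriangular := by
  intro i l (hil : i < l)
  simp only [shiftRowsSub, of_apply, hil.ne', if_false]
  rw [if_neg (by rw [Fin.lt_def] at hil; omega)]

theorem det_shiftRowsSub :
    (shiftRowsSub n N : Matrix (Fin n) (Fin n) R).det = (-1) ^ (n - N) := by
  rw [det_of_isLowerTriangular _ isLowerTriangular_shiftRowsSub]
  simp only [shiftRowsSub, of_apply, if_true]
  rw [prod_ite, prod_const_one, one_mul, prod_const, filter_not, card_sdiff_of_subset
    (filter_subset _ _), Fin.card_filter_val_lt, card_univ, Fintype.card_fin]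
  congr 1
  omega

theorem shiftRowsSub_mul_of_lt (A : Matrix (Fin n) (Fin n) R) {i : Fin n} (hi : (i : ℕ) < N) :
    (shiftRowsSub n N * A : Matrix (Fin n) (Fin n) R) i = A i := by
  ext j
  rw [mul_apply, sum_eq_single i]
  · simp [shiftRowsSub, hi]
  · intro l _ hl
    simp only [shiftRowsSub, of_apply, hl, if_false]
    rw [if_neg (by omega), zero_mul]
  · simp

theorem shiftRowsSub_mul_of_add_eq (hN : 0 < N) (A : Matrix (Fin n) (Fin n) R) {i l : Fin n}
    (hil : (l : ℕ) + N = i) : (shiftRowsSub n N * A : Matrix (Fin n) (Fin n) R) i = A l - A i := by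
  have hli : l ≠ i := Fin.ne_of_val_ne (by omega)
  ext j
  have hrow : ∀ l', (shiftRowsSub n N : Matrix (Fin n) (Fin n) R) i l' =
      -(if l' = i then 1 else 0) + if l' = l then 1 else 0 := by
    intro l'
    by_cases h₁ : l' = i
    · simp [shiftRowsSub, h₁, hli.symm]
      omega
    · simp only [shiftRowsSub, of_apply, h₁, if_false, neg_zero, zero_add, Fin.ext_iff]
      split_ifs <;> first | rfl | omega
  simp only [mul_apply, hrow, add_mul, neg_mul, ite_mul, one_mul, zero_mul, sum_add_distrib,
    sum_neg_distrib, sum_ite_eq', mem_univ, if_true]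
  simp [sub_eq_neg_add]

theorem det_eq_neg_one_pow_mul_det_of_rows (hN : 0 < N) {A B : Matrix (Fin n) (Fin n) R}
    (hlow : ∀ i : Fin n, (i : ℕ) < N → B i = A i)
    (hhigh : ∀ i l : Fin n, (l : ℕ) + N = i → B i = A l - A i) :
    B.det = (-1) ^ (n - N) * A.det := by
  have hB : B = shiftRowsSub n N * A := by
    funext i
    rcases lt_or_ge (i : ℕ) N with hi | hi
    · rw [hlow i hi, shiftRowsSub_mul_of_lt A hi]
    · have hil : ((⟨i - N, by omega⟩ : Fin n) : ℕ) + N = i := Nat.sub_add_cancel hi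
      rw [hhigh i _ hil, shiftRowsSub_mul_of_add_eq hN A hil]
  rw [hB, det_mul, det_shiftRowsSub]

end Matrix

open Matrix

theorem case_small_general (k n m : ℕ) (hn2 : n ≤ 2 ^ k) :
    (Matrix.of fun i j : Fin n => U i (m + j)).det =
      (-1 : ℤ) ^ (n - 2 ^ (k - 1)) *
        (Matrix.of fun i j : Fin n => U i (m + 2 ^ (k - 1) + j)).det := by
  have hn : n ≤ 2 ^ (k - 1 + 1) := hn2.trans (Nat.pow_le_pow_right two_pos (by omega))
  have hshift := det_eq_neg_one_pow_mul_det_of_rows (N := 2 ^ (k - 1)) (by positivity)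
    (A := of fun i j : Fin n => U i (m + j)) (B := of fun i j : Fin n => U i (m + 2 ^ (k - 1) + j))
    (fun i hi => funext fun j => by
      simp only [of_apply, add_right_comm m, U_add_two_pow_of_lt hi])
    (fun i l hil => funext fun j => by
      rw [of_apply, Pi.sub_apply, of_apply, of_apply, add_right_comm m,
        U_add_two_pow_of_le (by omega) (i.isLt.trans_le hn), ← hil, Nat.add_sub_cancel])
  rw [hshift, ← mul_assoc, ← pow_add, Even.neg_one_pow ⟨_, rfl⟩, one_mul]

theorem case_small (k n m : ℕ) (hk : 1 ≤ k)
    (hn1 : 2 ^ (k - 1) < n) (hn2 : n ≤ 2 ^ k) (hm : m < 2 ^ (k - 1)) :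
    (Matrix.of fun i j : Fin n => U i (m + j)).det =
      (-1 : ℤ) ^ (n - 2 ^ (k - 1)) *
        (Matrix.of fun i j : Fin n => U i (m + 2 ^ (k - 1) + j)).det :=
  case_small_general k n m hn2
end

section
/- Define U : ℕ × ℕ → ℤ by U(i,j) = 1 if C(j,i) is odd and 0 otherwise. Suppose 2^{k−1} < n ≤ 2^k and 2^{k−1} ≤ m < 2^k, and let r = m+n−2^k ≥ 0. Then |det((U(i, m+j))_{0≤i,j<n})| = |det((U(i, m+j))_{r≤i<n, 0≤j<2^k−m})|, where the second matrix is the (2^k−m)×(2^k−m) bottom-left block with rows [r, n) and columns m,…,2^k−1 of U. -/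
open Matrix

theorem Nat.Prime.cast_choose_pow_add {p k t i : ℕ} (hp : p.Prime) (hi : i < p ^ k) :
    ((p ^ k + t).choose i : ZMod p) = t.choose i := by
  rw [Nat.add_choose_eq, Nat.cast_sum, Finset.sum_eq_single (0, i)]
  · simp
  · rintro ⟨j, l⟩ hjl hne
    rw [Finset.HasAntidiagonal.mem_antidiagonal] at hjl
    have hj0 : j ≠ 0 := by rintro rfl; simp_all
    have hjk : j ≠ p ^ k := by omega
    rw [Nat.cast_mul, (ZMod.natCast_eq_zero_iff _ p).2 (hp.dvd_choose_pow hj0 hjk), zero_mul]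
  · simp

lemma U_two_pow_add {k t i : ℕ} (hi : i < 2 ^ k) : U i (2 ^ k + t) = U i t := by
  simp only [U, ← ZMod.natCast_eq_one_iff_odd, Nat.prime_two.cast_choose_pow_add hi]

lemma U_of_lt {i j : ℕ} (h : j < i) : U i j = 0 := by
  simp [U, Nat.choose_eq_zero_of_lt h]

lemma U_self (i : ℕ) : U i i = 1 := by
  simp [U]

lemma det_U_two_pow_add {k r : ℕ} (hr : r ≤ 2 ^ k) :
    (of fun i j : Fin r => U i (2 ^ k + j)).det = 1 := by
  have hlt (i : Fin r) : (i : ℕ) < 2 ^ k := by omega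
  rw [det_of_isUpperTriangular]
  · exact Finset.prod_eq_one fun i _ => by simp [U_two_pow_add (hlt i), U_self]
  · intro i j hji
    simp [U_two_pow_add (hlt i), U_of_lt (show (j : ℕ) < i from hji)]

theorem abs_det_of_lowerRight_eq_zero {R : Type*} [CommRing R] [LinearOrder R]
    [IsStrictOrderedRing R] {n r a : ℕ} (hn : r + a = n) (f : ℕ → ℕ → R)
    (hzero : ∀ (i : Fin a) (j : Fin r), f (r + i) (a + j) = 0) :
    |(of fun i j : Fin n => f i j).det| =
      |(of fun i j : Fin a => f (r + i) j).det| * |(of fun i j : Fin r => f i (a + j)).det| := by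
  subst hn
  let eRow : Fin a ⊕ Fin r ≃ Fin (r + a) := (Equiv.sumComm _ _).trans finSumFinEquiv
  let eCol : Fin a ⊕ Fin r ≃ Fin (r + a) := finSumFinEquiv.trans (finCongr (Nat.add_comm a r))
  have hblocks : (of fun i j : Fin (r + a) => f i j).submatrix eRow eCol =
      fromBlocks (of fun i j : Fin a => f (r + i) j) 0
        (of fun (i : Fin r) (j : Fin a) => f i j) (of fun i j : Fin r => f i (a + j)) := by
    ext (i | i) (j | j) <;> simp [eRow, eCol, Nat.add_comm _ a, hzero]
  rw [← abs_det_submatrix_equiv_equiv eRow eCol, hblocks, det_fromBlocks_zero₁₂, abs_mul]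

theorem det_reduces_to_bottom_left_block_general (k n m : ℕ)
    (hn1 : 2 ^ (k - 1) < n) (hn2 : n ≤ 2 ^ k)
    (hm1 : 2 ^ (k - 1) ≤ m) (hm2 : m < 2 ^ k) :
    |(Matrix.of fun i j : Fin n => U i (m + j)).det| =
      |(Matrix.of fun i j : Fin (2 ^ k - m) =>
          U ((m + n - 2 ^ k) + i) (m + j)).det| := by
  have hk : 2 ^ k ≤ 2 ^ (k - 1) + 2 ^ (k - 1) := by
    rw [← two_mul, ← pow_succ']
    exact Nat.pow_le_pow_right two_pos (by omega)
  set a := 2 ^ k - m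
  set r := m + n - 2 ^ k
  have hshift (j : ℕ) : m + (a + j) = 2 ^ k + j := by omega
  rw [abs_det_of_lowerRight_eq_zero (show r + a = n by omega) (fun i j => U i (m + j))]
  · simp only [hshift, det_U_two_pow_add (show r ≤ 2 ^ k by omega), abs_one, mul_one]
  · intro i j
    rw [hshift, U_two_pow_add (by omega), U_of_lt (by omega)]

theorem det_reduces_to_bottom_left_block (k n m : ℕ) (hk : 1 ≤ k)
    (hn1 : 2 ^ (k - 1) < n) (hn2 : n ≤ 2 ^ k)
    (hm1 : 2 ^ (k - 1) ≤ m) (hm2 : m < 2 ^ k) :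
    |(Matrix.of fun i j : Fin n => U i (m + j)).det| =
      |(Matrix.of fun i j : Fin (2 ^ k - m) =>
          U ((m + n - 2 ^ k) + i) (m + j)).det| :=
  det_reduces_to_bottom_left_block_general k n m hn1 hn2 hm1 hm2
end

section
/- Define U : ℕ × ℕ → ℤ by U(i,j) = 1 if C(j,i) is odd and 0 otherwise, and let k ≥ 1, 2^{k−1} < n ≤ 2^k, 2^{k−1} ≤ m < 2^k, r = m+n−2^k. Then the bottom-left block (U(i, m+j))_{r≤i<n, 0≤j<2^k−m} equals the anti-transpose of the matrix (U(i, (2^k−n)+j))_{0≤i,j<2^k−m}: explicitly, U(r+s, m+t) = U(2^k−m−1−t, 2^k−n + (2^k−m−1−s)) for 0 ≤ s, t < 2^k−m. -/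
private lemma add_of_and_eq_zero : ∀ a : ℕ, ∀ b : ℕ, a &&& b = 0 → a + b = a ||| b := by
  intro a
  induction a using Nat.strong_induction_on with
  | _ a ih =>
    intro b hab
    rcases Nat.eq_zero_or_pos a with rfl | ha
    · simp
    · have h2 : a / 2 &&& b / 2 = 0 := by rw [← Nat.and_div_two, hab]
      have ih2 := ih (a / 2) (by omega) (b / 2) h2
      have hm := Nat.and_mod_two_eq_one (a := a) (b := b)
      rw [hab] at hm
      have hor := Nat.or_mod_two_eq_one (a := a) (b := b)
      have hd : (a ||| b) / 2 = a / 2 ||| b / 2 := Nat.or_div_two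
      omega

private lemma xor_of_subset {d e : ℕ} (h : ∀ i, d.testBit i = true → e.testBit i = true) :
    (e ^^^ d) + d = e := by
  have h0 : (e ^^^ d) &&& d = 0 := by
    apply Nat.zero_of_testBit_eq_false
    intro i
    rw [Nat.testBit_and, Nat.testBit_xor]
    cases hdi : d.testBit i
    · simp
    · simp [h i hdi]
  rw [add_of_and_eq_zero _ _ h0]
  apply Nat.eq_of_testBit_eq
  intro i
  rw [Nat.testBit_or, Nat.testBit_xor]
  cases hdi : d.testBit i
  · simp
  · simp [h i hdi]

private lemma key_bit (k j d : ℕ) (hj : j < 2 ^ k) (hd : d < 2 ^ k) :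
    (∀ i, d.testBit i = true → j.testBit i = true) ↔
    (∀ i, d.testBit i = true → ((2 ^ k - 1 - j) + d).testBit i = true) := by
  have hc : ∀ i, (2 ^ k - 1 - j).testBit i = (decide (i < k) && ! j.testBit i) := by
    intro i
    have e : 2 ^ k - 1 - j = 2 ^ k - (j + 1) := by omega
    rw [e, Nat.testBit_two_pow_sub_succ hj]
  have hdk : ∀ i, d.testBit i = true → i < k := by
    intro i hi
    by_contra hik
    rw [Nat.testBit_eq_false_of_lt
      (lt_of_lt_of_le hd (Nat.pow_le_pow_right (by norm_num) (le_of_not_gt hik)))] at hi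
    exact absurd hi (by simp)
  constructor
  · intro hA
    have h0 : (2 ^ k - 1 - j) &&& d = 0 := by
      apply Nat.zero_of_testBit_eq_false
      intro i
      rw [Nat.testBit_and, hc]
      cases hdi : d.testBit i
      · simp
      · simp [hA i hdi]
    intro i hdi
    rw [add_of_and_eq_zero _ _ h0, Nat.testBit_or, hdi]
    simp
  · intro hB
    have hcd : ((2 ^ k - 1 - j) + d) ^^^ d = 2 ^ k - 1 - j := by
      have := xor_of_subset hB
      omega
    intro i hdi
    have h1 : (2 ^ k - 1 - j).testBit i = false := by
      rw [← hcd, Nat.testBit_xor, hB i hdi, hdi]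
      simp
    rw [hc] at h1
    simpa [hdk i hdi] using h1

private lemma odd_choose (n k : ℕ) :
    Odd (n.choose k) ↔ ∀ i, k.testBit i = true → n.testBit i = true := by
  induction n using Nat.strong_induction_on generalizing k with
  | _ n ih =>
    rcases Nat.eq_zero_or_pos n with rfl | hn
    · cases k with
      | zero => simp
      | succ k =>
        rw [Nat.choose_zero_succ]
        simp only [Nat.odd_iff, Nat.zero_mod, Nat.zero_testBit]
        constructor
        · intro h; omega
        · intro h
          obtain ⟨i, hi⟩ := Nat.exists_testBit_of_ne_zero (x := k + 1) (by omega)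
          exact absurd (h i hi) (by simp)
    · have h2 : Fact (Nat.Prime 2) := ⟨Nat.prime_two⟩
      have key : n.choose k % 2 = ((n % 2).choose (k % 2) * ((n / 2).choose (k / 2))) % 2 :=
        Choose.choose_modEq_choose_mod_mul_choose_div_nat
      have hA : Odd ((n % 2).choose (k % 2)) ↔ (k % 2 = 1 → n % 2 = 1) := by
        rcases Nat.mod_two_eq_zero_or_one n with h1 | h1 <;>
          rcases Nat.mod_two_eq_zero_or_one k with h2 | h2 <;> rw [h1, h2] <;> decide
      have hB := ih (n / 2) (by omega) (k / 2)
      rw [Nat.odd_iff, key, ← Nat.odd_iff, Nat.odd_mul, hA, hB]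
      constructor
      · rintro ⟨h0, hrec⟩ i hki
        cases i with
        | zero =>
          rw [Nat.testBit_zero] at hki ⊢
          simp only [decide_eq_true_eq] at hki ⊢
          exact h0 hki
        | succ i =>
          rw [Nat.testBit_add_one] at hki ⊢
          exact hrec i hki
      · intro h
        constructor
        · intro hk1
          have := h 0
          rw [Nat.testBit_zero, Nat.testBit_zero] at this
          simpa [hk1] using this
        · intro i hki
          have := h (i + 1)
          rw [Nat.testBit_add_one, Nat.testBit_add_one] at this
          exact this hki

theorem bottom_left_block_antitranspose (k n m : ℕ) (hk : 1 ≤ k)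
    (hn1 : 2 ^ (k - 1) < n) (hn2 : n ≤ 2 ^ k)
    (hm1 : 2 ^ (k - 1) ≤ m) (hm2 : m < 2 ^ k)
    (s t : ℕ) (hs : s < 2 ^ k - m) (ht : t < 2 ^ k - m) :
    U ((m + n - 2 ^ k) + s) (m + t) =
      U (2 ^ k - m - 1 - t) ((2 ^ k - n) + (2 ^ k - m - 1 - s)) := by
  have hpow : 2 ^ k = 2 * 2 ^ (k - 1) := by
    conv_lhs => rw [show k = k - 1 + 1 by omega]
    rw [pow_succ]
    ring
  rcases le_or_gt ((m + n - 2 ^ k) + s) (m + t) with hij | hij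
  · -- main case
    set d : ℕ := (2 ^ k - n) + t - s with hdef
    have e1 : (m + n - 2 ^ k) + s = (m + t) - d := by omega
    have e2 : 2 ^ k - m - 1 - t = ((2 ^ k - n) + (2 ^ k - m - 1 - s)) - d := by omega
    have hd1 : d ≤ m + t := by omega
    have hd2 : d ≤ (2 ^ k - n) + (2 ^ k - m - 1 - s) := by omega
    have hiff : Odd ((m + t).choose d) ↔
        Odd (((2 ^ k - n) + (2 ^ k - m - 1 - s)).choose d) := by
      rw [odd_choose, odd_choose]
      have hc : (2 ^ k - n) + (2 ^ k - m - 1 - s) = (2 ^ k - 1 - (m + t)) + d := by omega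
      rw [hc]
      exact key_bit k (m + t) d (by omega) (by omega)
    simp only [U, e1, e2, Nat.choose_symm hd1, Nat.choose_symm hd2, hiff]
  · -- both binomial coefficients vanish
    have h2 : (2 ^ k - n) + (2 ^ k - m - 1 - s) < 2 ^ k - m - 1 - t := by omega
    simp [U, Nat.choose_eq_zero_of_lt hij, Nat.choose_eq_zero_of_lt h2]
end

section
/- Define P : ℕ × ℕ → ℤ by P(i,j) = 1 if C(i+j, i) is odd and 0 otherwise. Then for every n ≥ 1 and m ≥ 0, the n×n submatrix (P(i, m+j))_{0≤i,j<n} has determinant 1 or −1 (computed in ℤ). -/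
def P (i j : ℕ) : ℤ := if Odd (Nat.choose (i + j) i) then 1 else 0

namespace PascalAux

lemma odd_choose (i c : ℕ) :
    Odd ((i + c).choose i) ↔
      Odd (((i + c) % 2).choose (i % 2)) ∧ Odd (((i + c) / 2).choose (i / 2)) := by
  have h : (i + c).choose i ≡
      ((i + c) % 2).choose (i % 2) * ((i + c) / 2).choose (i / 2) [MOD 2] :=
    @Choose.choose_modEq_choose_mod_mul_choose_div_nat (i + c) i 2 ⟨Nat.prime_two⟩
  have h' : (i + c).choose i % 2 =
      (((i + c) % 2).choose (i % 2) * ((i + c) / 2).choose (i / 2)) % 2 := h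
  rw [Nat.odd_iff, h', ← Nat.odd_iff, Nat.odd_mul]

lemma P_ee (a c : ℕ) : P (2 * a) (2 * c) = P a c := by
  have h : Odd ((2*a + 2*c).choose (2*a)) ↔ Odd ((a + c).choose a) := by
    rw [odd_choose]
    have h1 : (2*a + 2*c) % 2 = 0 := by omega
    have h2 : (2*a) % 2 = 0 := by omega
    have h3 : (2*a + 2*c) / 2 = a + c := by omega
    have h4 : (2*a) / 2 = a := by omega
    rw [h1, h2, h3, h4]
    simp
  simp only [P, h]

lemma P_eo (a c : ℕ) : P (2 * a) (2 * c + 1) = P a c := by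
  have h : Odd ((2*a + (2*c+1)).choose (2*a)) ↔ Odd ((a + c).choose a) := by
    rw [odd_choose]
    have h1 : (2*a + (2*c+1)) % 2 = 1 := by omega
    have h2 : (2*a) % 2 = 0 := by omega
    have h3 : (2*a + (2*c+1)) / 2 = a + c := by omega
    have h4 : (2*a) / 2 = a := by omega
    rw [h1, h2, h3, h4]
    simp
  simp only [P, h]

lemma P_oe (a c : ℕ) : P (2 * a + 1) (2 * c) = P a c := by
  have h : Odd ((2*a+1 + 2*c).choose (2*a+1)) ↔ Odd ((a + c).choose a) := by
    rw [odd_choose]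
    have h1 : (2*a+1 + 2*c) % 2 = 1 := by omega
    have h2 : (2*a+1) % 2 = 1 := by omega
    have h3 : (2*a+1 + 2*c) / 2 = a + c := by omega
    have h4 : (2*a+1) / 2 = a := by omega
    rw [h1, h2, h3, h4]
    simp
  simp only [P, h]

lemma P_oo (a c : ℕ) : P (2 * a + 1) (2 * c + 1) = 0 := by
  have h : ¬ Odd ((2*a+1 + (2*c+1)).choose (2*a+1)) := by
    rw [odd_choose]
    have h1 : (2*a+1 + (2*c+1)) % 2 = 0 := by omega
    have h2 : (2*a+1) % 2 = 1 := by omega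
    rw [h1, h2]
    simp
  simp only [P, h, if_false]

/-- The window matrix: rows `0..n-1`, columns `m..m+n-1` of the mod-2 Pascal matrix. -/
def W (n m : ℕ) : Matrix (Fin n) (Fin n) ℤ := Matrix.of fun i j : Fin n => P i (m + j)

/-- interleaving map: `inl a ↦ 2a+1`, `inr a ↦ 2a`. -/
def oeFun (n : ℕ) : Fin (n / 2) ⊕ Fin ((n + 1) / 2) → Fin n
  | Sum.inl a => ⟨2 * a.val + 1, by have := a.isLt; omega⟩
  | Sum.inr a => ⟨2 * a.val, by have := a.isLt; omega⟩

lemma oeFun_bij (n : ℕ) : Function.Bijective (oeFun n) := by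
  constructor
  · rintro (a | a) (b | b) h <;>
      simp only [oeFun, Fin.mk.injEq] at h
    · exact congrArg Sum.inl (Fin.ext (by omega))
    · exact absurd h (by omega)
    · exact absurd h (by omega)
    · exact congrArg Sum.inr (Fin.ext (by omega))
  · rintro ⟨i, hi⟩
    rcases Nat.even_or_odd i with h | h
    · rw [Nat.even_iff] at h
      exact ⟨Sum.inr ⟨i / 2, by omega⟩, by simp only [oeFun, Fin.mk.injEq]; omega⟩
    · rw [Nat.odd_iff] at h
      exact ⟨Sum.inl ⟨i / 2, by omega⟩, by simp only [oeFun, Fin.mk.injEq]; omega⟩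

noncomputable def oe (n : ℕ) : Fin (n / 2) ⊕ Fin ((n + 1) / 2) ≃ Fin n :=
  Equiv.ofBijective _ (oeFun_bij n)

/-- rows map for the even-`m` case: `inl a ↦ 2a`, `inr a ↦ 2a+1` (or `2a` for the lone row). -/
def reFun (n : ℕ) : Fin (n / 2) ⊕ Fin ((n + 1) / 2) → Fin n
  | Sum.inl a => ⟨2 * a.val, by have := a.isLt; omega⟩
  | Sum.inr a => ⟨if 2 * a.val + 1 < n then 2 * a.val + 1 else 2 * a.val,
      by have := a.isLt; split <;> omega⟩

lemma reFun_bij (n : ℕ) : Function.Bijective (reFun n) := by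
  constructor
  · rintro (a | a) (b | b) h <;>
      simp only [reFun, Fin.mk.injEq] at h
    · exact congrArg Sum.inl (Fin.ext (by omega))
    · exact absurd h (by have := b.isLt; split <;> omega)
    · exact absurd h (by have := a.isLt; split <;> omega)
    · refine congrArg Sum.inr (Fin.ext ?_)
      have := a.isLt; have := b.isLt
      split at h <;> split at h <;> omega
  · rintro ⟨i, hi⟩
    rcases Nat.even_or_odd i with h | h
    · rw [Nat.even_iff] at h
      by_cases h2 : i + 1 < n
      · exact ⟨Sum.inl ⟨i / 2, by omega⟩, by simp only [reFun, Fin.mk.injEq]; omega⟩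
      · refine ⟨Sum.inr ⟨i / 2, by omega⟩, ?_⟩
        simp only [reFun, Fin.mk.injEq]
        rw [if_neg (by omega)]
        omega
    · rw [Nat.odd_iff] at h
      refine ⟨Sum.inr ⟨i / 2, by omega⟩, ?_⟩
      simp only [reFun, Fin.mk.injEq]
      rw [if_pos (by omega)]
      omega

noncomputable def re (n : ℕ) : Fin (n / 2) ⊕ Fin ((n + 1) / 2) ≃ Fin n :=
  Equiv.ofBijective _ (reFun_bij n)

lemma key (n : ℕ) : ∀ m : ℕ, IsUnit (W n m).det := by
  induction n using Nat.strong_induction_on with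
  | _ n ih =>
  intro m
  rcases Nat.lt_or_ge n 2 with h2 | h2
  · interval_cases n
    · simp [W]
    · have : (W 1 m).det = 1 := by
        rw [Matrix.det_fin_one]
        simp [W, P]
      rw [this]; exact isUnit_one
  · rcases Nat.even_or_odd m with ⟨μ, hμ⟩ | ⟨μ, hμ⟩
    · -- m even : one row operation (subtract odd row from preceding even row)
      set M := W n m with hM
      set N : Matrix (Fin n) (Fin n) ℤ :=
        Matrix.of fun i k : Fin n =>
          if i.val % 2 = 0 ∧ k.val = i.val + 1 then (-1 : ℤ) else 0 with hN
      have hNM : ∀ (i j : Fin n), (N * M) i j =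
          if h : i.val % 2 = 0 ∧ i.val + 1 < n then -(M ⟨i.val + 1, h.2⟩ j) else 0 := by
        intro i j
        rw [Matrix.mul_apply]
        split_ifs with h
        · rw [Finset.sum_eq_single (⟨i.val + 1, h.2⟩ : Fin n)]
          · simp [hN, h.1]
          · intro k _ hk
            have hkv : (k : ℕ) ≠ i.val + 1 := fun hh => hk (Fin.ext hh)
            simp [hN, hkv]
          · intro hmem; exact absurd (Finset.mem_univ _) hmem
        · apply Finset.sum_eq_zero
          intro k _
          have hc : ¬((i : ℕ) % 2 = 0 ∧ (k : ℕ) = (i : ℕ) + 1) := by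
            have := k.isLt; omega
          simp [hN, hc]
      have hL : ((1 + N) : Matrix (Fin n) (Fin n) ℤ).det = 1 := by
        have ht : ((1 + N) : Matrix (Fin n) (Fin n) ℤ).BlockTriangular id := by
          intro i j hij
          have hij' : (j : ℕ) < (i : ℕ) := hij
          simp only [Matrix.add_apply, hN, Matrix.of_apply]
          rw [Matrix.one_apply_ne (by intro hh; rw [hh] at hij'; omega), if_neg (by omega)]
          norm_num
        rw [Matrix.det_of_upperTriangular ht]
        apply Finset.prod_eq_one
        intro i _
        simp [Matrix.one_apply, hN]
      have hplus : ∀ i j : Fin n, ((1 + N) * M) i j = M i j + (N * M) i j := by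
        intro i j; rw [add_mul, one_mul, Matrix.add_apply]
      have hentry : ∀ i j : Fin n, ((1 + N) * M) i j =
          P i (m + j) +
            (if (i : ℕ) % 2 = 0 ∧ (i : ℕ) + 1 < n then -(P ((i : ℕ) + 1) (m + j)) else 0) := by
        intro i j
        rw [hplus, hNM]
        split_ifs with h
        · simp [hM, W]
        · simp [hM, W]
      have hsub : ((1 + N) * M).submatrix (re n) (oe n) =
          Matrix.fromBlocks (W (n / 2) μ) 0
            (Matrix.of fun (a : Fin ((n + 1) / 2)) (b : Fin (n / 2)) =>
              if 2 * a.val + 1 < n then 0 else P a (μ + b))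
            (W ((n + 1) / 2) μ) := by
        ext x y
        rw [Matrix.submatrix_apply, hentry]
        rcases x with a | a <;> rcases y with b | b <;>
          simp only [oe, re, Equiv.ofBijective, Equiv.coe_fn_mk, reFun, oeFun,
            Matrix.fromBlocks_apply₁₁, Matrix.fromBlocks_apply₁₂,
            Matrix.fromBlocks_apply₂₁, Matrix.fromBlocks_apply₂₂, Matrix.zero_apply,
            Matrix.of_apply, W]
        · -- row 2a, col 2b+1
          have ha := a.isLt
          have hc : 2 * (a : ℕ) % 2 = 0 ∧ 2 * (a : ℕ) + 1 < n := ⟨by omega, by omega⟩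
          simp only [hc, and_self, ↓reduceIte]
          have e1 : m + (2 * (b : ℕ) + 1) = 2 * (μ + (b : ℕ)) + 1 := by omega
          rw [e1, P_eo, P_oo]
          simp
        · -- row 2a, col 2b
          have ha := a.isLt
          have hc : 2 * (a : ℕ) % 2 = 0 ∧ 2 * (a : ℕ) + 1 < n := ⟨by omega, by omega⟩
          simp only [hc, and_self, ↓reduceIte]
          have e1 : m + 2 * (b : ℕ) = 2 * (μ + (b : ℕ)) := by omega
          rw [e1, P_ee, P_oe]
          ring
        · -- row (2a+1 or lone 2a), col 2b+1
          have ha := a.isLt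
          have e1 : m + (2 * (b : ℕ) + 1) = 2 * (μ + (b : ℕ)) + 1 := by omega
          by_cases hc : 2 * (a : ℕ) + 1 < n
          · simp only [if_pos hc]
            rw [if_neg (by omega), e1, P_oo]
            simp
          · simp only [if_neg hc]
            rw [if_neg (by omega), e1, P_eo]
            simp
        · -- row (2a+1 or lone 2a), col 2b
          have ha := a.isLt
          have e1 : m + 2 * (b : ℕ) = 2 * (μ + (b : ℕ)) := by omega
          by_cases hc : 2 * (a : ℕ) + 1 < n
          · simp only [if_pos hc]
            rw [if_neg (by omega), e1, P_oe]
            simp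
          · simp only [if_neg hc]
            rw [if_neg (by omega), e1, P_ee]
            simp
      have hdet1 : ((1 + N) * M).det = M.det := by
        rw [Matrix.det_mul, hL, one_mul]
      set σ : Equiv.Perm (Fin (n / 2) ⊕ Fin ((n + 1) / 2)) := (oe n).trans (re n).symm with hσ
      have hperm : ((1 + N) * M).submatrix (re n) (oe n) =
          (((1 + N) * M).submatrix (re n) (re n)).submatrix id σ := by
        ext x y
        simp [hσ, Matrix.submatrix_apply]
      have h2 : ∃ s : ℤˣ, (W (n / 2) μ).det * (W ((n + 1) / 2) μ).det =
          (s : ℤ) * M.det :=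
        ⟨Equiv.Perm.sign σ, by
          rw [← Matrix.det_fromBlocks_zero₁₂, ← hsub, hperm, Matrix.det_permute',
            Matrix.det_submatrix_equiv_self, hdet1]
          norm_cast⟩
      obtain ⟨s, hs⟩ := h2
      have hu : IsUnit ((W (n / 2) μ).det * (W ((n + 1) / 2) μ).det) :=
        (ih (n / 2) (by omega) μ).mul (ih ((n + 1) / 2) (by omega) μ)
      rw [hs] at hu
      exact isUnit_of_mul_isUnit_right hu
    · -- m odd : direct block decomposition
      have hsub : (W n m).submatrix (oe n) (oe n) =
          Matrix.fromBlocks (W (n / 2) (μ + 1)) 0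
            (Matrix.of fun (a : Fin ((n+1)/2)) (b : Fin (n/2)) => P a ((μ + 1) + b))
            (W ((n + 1) / 2) μ) := by
        ext x y
        rcases x with a | a <;> rcases y with b | b <;>
          simp only [Matrix.submatrix_apply, oe, Equiv.ofBijective, Equiv.coe_fn_mk, oeFun, W,
            Matrix.of_apply, Matrix.fromBlocks_apply₁₁, Matrix.fromBlocks_apply₁₂,
            Matrix.fromBlocks_apply₂₁, Matrix.fromBlocks_apply₂₂, Matrix.zero_apply]
        · have e : m + (2 * b.val + 1) = 2 * ((μ + 1) + b.val) := by omega
          rw [e, P_oe]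
        · have e : m + 2 * b.val = 2 * (μ + b.val) + 1 := by omega
          rw [e, P_oo]
        · have e : m + (2 * b.val + 1) = 2 * ((μ + 1) + b.val) := by omega
          rw [e, P_ee]
        · have e : m + 2 * b.val = 2 * (μ + b.val) + 1 := by omega
          rw [e, P_eo]
      have hdet : (W n m).det = (W (n / 2) (μ + 1)).det * (W ((n + 1) / 2) μ).det := by
        rw [← Matrix.det_submatrix_equiv_self (oe n) (W n m), hsub,
          Matrix.det_fromBlocks_zero₁₂]
      rw [hdet]
      exact (ih (n / 2) (by omega) (μ + 1)).mul (ih ((n + 1) / 2) (by omega) μ)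

end PascalAux

theorem pascal_submatrix_det (n m : ℕ) (hn : 1 ≤ n) :
    (Matrix.of fun i j : Fin n => P i (m + j)).det = 1 ∨
    (Matrix.of fun i j : Fin n => P i (m + j)).det = -1 := by
  have h := PascalAux.key n m
  exact Int.isUnit_iff.mp h
end

section
/- Let U(i,j) = C(j,i) mod 2, L(i,j) = C(i,j) mod 2 (both valued in {0,1} ⊆ ℤ), P(i,j) = C(i+j,i) mod 2, and let D be the diagonal matrix with D(i,i) = (−1)^{s(i)} where s(i) is the number of 1's in the binary expansion of i. Then for every n ≥ 1, the n×n matrices satisfy P(n) = L(n) · D(n) · U(n), where X(n) denotes the top-left n×n submatrix of X. -/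
def L (i j : ℕ) : ℤ := if Odd (Nat.choose i j) then 1 else 0

def D (i j : ℕ) : ℤ := if i = j then (-1) ^ (Nat.digits 2 i).sum else 0

/-!
Identify a natural number with the set of its binary digits equal to one
(`Finset.Nat.equivBitIndices`). Lucas' theorem modulo 2 says that `C(i, k)` is odd exactly when
the bits of `k` are among those of `i`; as a consequence `C(i + j, i)` is odd exactly when the
bits of `i` and `j` are disjoint (no carries in `i + j`). The `(i, j)` entry of `L D U` is
therefore `∑_{T ⊆ bits i ∩ bits j} (-1)^|T|`, which is `1` if the intersection is empty and `0`
otherwise, i.e. the `(i, j)` entry of `P`.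
-/

open Finset Finset.Nat

lemma Nat.odd_choose_iff_odd_choose_mod_two_and_div_two (n k : ℕ) :
    Odd (n.choose k) ↔ Odd ((n % 2).choose (k % 2)) ∧ Odd ((n / 2).choose (k / 2)) := by
  have := Fact.mk Nat.prime_two
  rw [← Nat.odd_mul, Nat.odd_iff, Nat.odd_iff, Choose.choose_modEq_choose_mod_mul_choose_div_nat]

lemma Nat.odd_choose_iff_testBit_imp (n k : ℕ) :
    Odd (n.choose k) ↔ ∀ i, k.testBit i → n.testBit i := by
  induction n using Nat.strong_induction_on generalizing k with
  | _ n ih =>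
  rcases n.eq_zero_or_pos with rfl | hn
  · rcases k.eq_zero_or_pos with rfl | hk
    · simp
    · have hbit : ∃ i, k.testBit i := by
        by_contra! h
        exact hk.ne' (Nat.zero_of_testBit_eq_false (by simpa using h))
      simp [Nat.choose_eq_zero_of_lt hk, hbit]
  rw [Nat.odd_choose_iff_odd_choose_mod_two_and_div_two, ih (n / 2) (by omega)]
  conv_rhs => rw [← Nat.and_forall_add_one]
  simp only [Nat.testBit_add_one, Nat.testBit_zero, decide_eq_true_eq]
  have lowest_digit : Odd ((n % 2).choose (k % 2)) ↔ (k % 2 = 1 → n % 2 = 1) := by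
    rcases Nat.mod_two_eq_zero_or_one n with h | h <;>
      rcases Nat.mod_two_eq_zero_or_one k with h' | h' <;> simp [h, h']
  rw [lowest_digit]

lemma Nat.odd_choose_iff_equivBitIndices_subset (n k : ℕ) :
    Odd (n.choose k) ↔ equivBitIndices k ⊆ equivBitIndices n := by
  simp [Nat.odd_choose_iff_testBit_imp, Finset.subset_iff]

namespace Finset.Nat

lemma le_of_equivBitIndices_subset {k m : ℕ} (h : equivBitIndices k ⊆ equivBitIndices m) :
    k ≤ m :=
  orderIsoColex.le_iff_le.1 (Colex.toColex_le_toColex_of_subset h)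

lemma equivBitIndices_subset_add_iff (i j : ℕ) :
    equivBitIndices i ⊆ equivBitIndices (i + j) ↔
      Disjoint (equivBitIndices i) (equivBitIndices j) := by
  constructor
  · intro h
    have hj : equivBitIndices j = equivBitIndices (i + j) \ equivBitIndices i := by
      have hsum := sum_sdiff h (f := fun t => 2 ^ t)
      rw [← Equiv.eq_symm_apply, equivBitIndices_symm_apply]
      simp only [equivBitIndices_apply, sum_toFinset_bitIndices_two_pow] at hsum ⊢
      omega
    rw [hj]
    exact disjoint_sdiff
  · intro h
    have hij : equivBitIndices (i + j) = equivBitIndices i ∪ equivBitIndices j := by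
      rw [← Equiv.eq_symm_apply, equivBitIndices_symm_apply, sum_union h]
      simp
    rw [hij]
    exact subset_union_left

lemma sum_range_ite_equivBitIndices_subset (S : Finset ℕ) {n : ℕ}
    (hS : equivBitIndices.symm S < n) :
    ∑ k ∈ range n, (if equivBitIndices k ⊆ S then (-1 : ℤ) ^ #(equivBitIndices k) else 0) =
      if S = ∅ then 1 else 0 := by
  rw [← sum_powerset_neg_one_pow_card, ← sum_filter]
  refine sum_equiv equivBitIndices (fun k => ?_) (fun _ _ => rfl)
  simp only [mem_filter, mem_range, mem_powerset, and_iff_right_iff_imp]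
  intro h
  exact (le_of_equivBitIndices_subset (by simpa using h)).trans_lt hS

end Finset.Nat

lemma Nat.odd_choose_add_iff (i j : ℕ) :
    Odd ((i + j).choose i) ↔ Disjoint (equivBitIndices i) (equivBitIndices j) := by
  rw [Nat.odd_choose_iff_equivBitIndices_subset, equivBitIndices_subset_add_iff]

lemma Nat.digits_two_sum_eq_card_equivBitIndices (k : ℕ) :
    (Nat.digits 2 k).sum = #(equivBitIndices k) := by
  rw [equivBitIndices_apply, List.toFinset_card_of_nodup Nat.bitIndices_nodup]
  induction k using Nat.strong_induction_on with
  | _ k ih =>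
  rcases k.eq_zero_or_pos with rfl | hk
  · simp
  obtain ⟨m, rfl | rfl⟩ := k.even_or_odd'
  · rw [Nat.digits_def' one_lt_two hk, Nat.bitIndices_two_mul]
    simp [ih m (by omega)]
  · rw [Nat.digits_def' one_lt_two hk, Nat.bitIndices_two_mul_add_one,
      show (2 * m + 1) / 2 = m by omega]
    simp [ih m (by omega), add_comm]

lemma L_mul_neg_one_pow_mul_U (i j k : ℕ) :
    L i k * (-1) ^ #(equivBitIndices k) * U k j =
      if equivBitIndices k ⊆ equivBitIndices i ∩ equivBitIndices j then
        (-1) ^ #(equivBitIndices k) else 0 := by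
  simp only [L, U, Nat.odd_choose_iff_equivBitIndices_subset, subset_inter_iff, ite_and]
  split_ifs <;> simp

theorem LDU_decomposition_general (n : ℕ) :
    (Matrix.of fun i j : Fin n => P i j) =
      (Matrix.of fun i j : Fin n => L i j) *
        (Matrix.of fun i j : Fin n => D i j) *
        (Matrix.of fun i j : Fin n => U i j) := by
  have hD : (Matrix.of fun i j : Fin n => D i j) =
      Matrix.diagonal fun k : Fin n => (-1 : ℤ) ^ #(equivBitIndices k) := by
    ext a b
    simp [D, Matrix.diagonal_apply, Fin.val_inj, Nat.digits_two_sum_eq_card_equivBitIndices]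
  ext i j
  set S := equivBitIndices i ∩ equivBitIndices j
  have hS : equivBitIndices.symm S < n :=
    (le_of_equivBitIndices_subset (by simp [S])).trans_lt i.isLt
  rw [hD, Matrix.mul_apply]
  simp only [Matrix.mul_diagonal, Matrix.of_apply, L_mul_neg_one_pow_mul_U]
  rw [Fin.sum_univ_eq_sum_range
      (fun k => if equivBitIndices k ⊆ S then (-1) ^ #(equivBitIndices k) else 0),
    sum_range_ite_equivBitIndices_subset S hS]
  simp [P, S, Nat.odd_choose_add_iff, disjoint_iff_inter_eq_empty]

theorem LDU_decomposition (n : ℕ) (hn : 1 ≤ n) :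
    (Matrix.of fun i j : Fin n => P i j) =
      (Matrix.of fun i j : Fin n => L i j) *
        (Matrix.of fun i j : Fin n => D i j) *
        (Matrix.of fun i j : Fin n => U i j) :=
  LDU_decomposition_general n
end

section
/- Let R be a commutative ring. Call an n×m matrix M over R Pascal-like if for every (i,j) with 0 ≤ i < n, 0 ≤ j < m, the square submatrix of M with bottom-right corner (i,j) and touching the top or left border (i.e., rows [i−s, i], columns [j−s, j] with s = min(i,j)) has determinant a unit in R. If R^× is finite, then the number of Pascal-like matrices in R^{n×m} is exactly (#R^×)^{nm}. -/
variable {R : Type*} [CommRing R]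

/-- The square submatrix of `M` with bottom-right corner `(i, j)` that touches the
top or the left border: rows `i - s, …, i` and columns `j - s, …, j` with `s = min i j`. -/
def borderSubmatrix {n m : ℕ} (M : Matrix (Fin n) (Fin m) R) (i : Fin n) (j : Fin m) :
    Matrix (Fin (min i.1 j.1 + 1)) (Fin (min i.1 j.1 + 1)) R :=
  Matrix.of fun a b =>
    M ⟨i.1 - min i.1 j.1 + a.1, by have := a.isLt; have := i.isLt; omega⟩
      ⟨j.1 - min i.1 j.1 + b.1, by have := b.isLt; have := j.isLt; omega⟩

/-- A matrix is Pascal-like if each of the square submatrices with bottom-right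
corner `(i, j)` touching the top or left border has unit determinant. -/
def PascalLike {n m : ℕ} (M : Matrix (Fin n) (Fin m) R) : Prop :=
  ∀ (i : Fin n) (j : Fin m), IsUnit (borderSubmatrix M i j).det


open Matrix

namespace PascalAux

/-- ℕ-indexed border submatrix with bottom-right corner `(i,j)`. -/
def bsub (g : ℕ → ℕ → R) (i j : ℕ) : Matrix (Fin (min i j + 1)) (Fin (min i j + 1)) R :=
  Matrix.of fun a b => g (i - min i j + a.1) (j - min i j + b.1)

/-- Determinant of the minor obtained by deleting the last row and column. -/
def minorDet (g : ℕ → ℕ → R) (i j : ℕ) : R :=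
  (Matrix.of fun a b : Fin (min i j) => g (i - min i j + a.1) (j - min i j + b.1)).det

def zeroCorner (g : ℕ → ℕ → R) (i j : ℕ) : ℕ → ℕ → R :=
  fun a b => if a = i ∧ b = j then 0 else g a b

def zeroDet (g : ℕ → ℕ → R) (i j : ℕ) : R := (bsub (zeroCorner g i j) i j).det

lemma det_updateRow_single (s : ℕ) (A : Matrix (Fin (s+1)) (Fin (s+1)) R) :
    (A.updateRow (Fin.last s) (Pi.single (Fin.last s) 1)).det
      = (A.submatrix Fin.castSucc Fin.castSucc).det := by
  rw [Matrix.det_succ_row _ (Fin.last s)]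
  rw [Finset.sum_eq_single (Fin.last s)]
  · simp [Fin.succAbove_last]
    congr 1
    ext a b
    simp [Matrix.submatrix_apply, Matrix.updateRow_apply, (Fin.castSucc_lt_last a).ne]
  · intro b _ hb
    simp [Matrix.updateRow_self, Pi.single_eq_of_ne hb]
  · simp

lemma det_affine (k : ℕ) (A : Matrix (Fin (k+1)) (Fin (k+1)) R) :
    A.det = A (Fin.last k) (Fin.last k) * (A.submatrix Fin.castSucc Fin.castSucc).det
      + (A.updateRow (Fin.last k)
          (Function.update (A (Fin.last k)) (Fin.last k) 0)).det := by
  have hA : A = A.updateRow (Fin.last k)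
      (Function.update (A (Fin.last k)) (Fin.last k) 0
        + A (Fin.last k) (Fin.last k) • (Pi.single (Fin.last k) 1 : Fin (k+1) → R)) := by
    rw [show (Function.update (A (Fin.last k)) (Fin.last k) 0
        + A (Fin.last k) (Fin.last k) • (Pi.single (Fin.last k) 1 : Fin (k+1) → R))
        = A (Fin.last k) from ?_,
      Matrix.updateRow_eq_self]
    funext b
    rcases eq_or_ne b (Fin.last k) with rfl | hb
    · simp
    · simp [Function.update_of_ne hb, Pi.single_eq_of_ne hb]
  conv_lhs => rw [hA]
  rw [Matrix.det_updateRow_add, Matrix.det_updateRow_smul, det_updateRow_single]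
  ring

/-- The determinant of the border submatrix is affine in the corner entry. -/
lemma det_bsub (g : ℕ → ℕ → R) (i j : ℕ) :
    (bsub g i j).det = g i j * minorDet g i j + zeroDet g i j := by
  have hsi : min i j ≤ i := Nat.min_le_left _ _
  have hsj : min i j ≤ j := Nat.min_le_right _ _
  have h := det_affine (min i j) (bsub g i j)
  rw [h]
  congr 1
  · congr 1
    · show g _ _ = g i j
      congr 1 <;> (simp only [Fin.val_last]; omega)
  · unfold zeroDet
    congr 1
    ext a b
    rcases eq_or_ne a (Fin.last (min i j)) with rfl | ha
    · rcases eq_or_ne b (Fin.last (min i j)) with rfl | hb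
      · simp [Matrix.updateRow_self, bsub, zeroCorner, Fin.val_last]
      · have hb' : b.1 < min i j := by
          have := b.isLt; rcases Nat.lt_succ_iff_lt_or_eq.mp this with h | h
          · exact h
          · exact absurd (Fin.ext h) hb
        simp only [Matrix.updateRow_self, Function.update_of_ne hb, bsub, Matrix.of_apply,
          zeroCorner]
        rw [if_neg (by rintro ⟨h1, h2⟩; omega)]
    · have ha' : a.1 < min i j := by
        have := a.isLt; rcases Nat.lt_succ_iff_lt_or_eq.mp this with h | h
        · exact h
        · exact absurd (Fin.ext h) ha
      simp only [Matrix.updateRow_ne ha, bsub, Matrix.of_apply, zeroCorner]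
      rw [if_neg (by rintro ⟨h1, h2⟩; omega)]

lemma minorDet_eq (g : ℕ → ℕ → R) {i j : ℕ} (hi : 1 ≤ i) (hj : 1 ≤ j) :
    minorDet g i j = (bsub g (i-1) (j-1)).det := by
  have hk : min (i-1) (j-1) + 1 = min i j := by omega
  rw [show bsub g (i-1) (j-1)
      = (Matrix.of fun a b : Fin (min i j) => g (i - min i j + a.1) (j - min i j + b.1)).submatrix
        (finCongr hk) (finCongr hk) from ?_]
  · rw [Matrix.det_submatrix_equiv_self]
    rfl
  · ext a b
    simp only [bsub, Matrix.submatrix_apply, Matrix.of_apply, finCongr_apply, Fin.coe_cast]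
    congr 1 <;> omega

lemma minorDet_congr (g h : ℕ → ℕ → R) (i j : ℕ)
    (H : ∀ a b, a ≤ i → b ≤ j → a + b < i + j → g a b = h a b) :
    minorDet g i j = minorDet h i j := by
  unfold minorDet
  congr 1
  ext a b
  have ha := a.isLt; have hb := b.isLt
  have hsi : min i j ≤ i := Nat.min_le_left _ _
  have hsj : min i j ≤ j := Nat.min_le_right _ _
  exact H _ _ (by omega) (by omega) (by omega)

lemma zeroDet_congr (g h : ℕ → ℕ → R) (i j : ℕ)
    (H : ∀ a b, a ≤ i → b ≤ j → a + b < i + j → g a b = h a b) :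
    zeroDet g i j = zeroDet h i j := by
  unfold zeroDet
  congr 1
  ext a b
  have ha := a.isLt; have hb := b.isLt
  have hsi : min i j ≤ i := Nat.min_le_left _ _
  have hsj : min i j ≤ j := Nat.min_le_right _ _
  simp only [bsub, Matrix.of_apply, zeroCorner]
  split_ifs with h'
  · rfl
  · exact H _ _ (by omega) (by omega) (by omega)


noncomputable def solveE (g : ℕ → ℕ → R) (i j : ℕ) (u : R) : R :=
  Ring.inverse (minorDet g i j) * (u - zeroDet g i j)

noncomputable def buildAux (u : ℕ → ℕ → R) : ℕ → ℕ → ℕ → R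
  | 0 => fun _ _ => 0
  | d+1 => fun i j =>
      if i + j < d then buildAux u d i j else solveE (buildAux u d) i j (u i j)

noncomputable def build (u : ℕ → ℕ → R) (i j : ℕ) : R := buildAux u (i + j + 1) i j

lemma buildAux_stable (u : ℕ → ℕ → R) :
    ∀ d i j, i + j < d → buildAux u d i j = build u i j := by
  intro d
  induction d with
  | zero => intro i j h; omega
  | succ d ih =>
    intro i j h
    by_cases h' : i + j < d
    · show (if i + j < d then buildAux u d i j else _) = _
      rw [if_pos h', ih i j h']
    · have hd : d = i + j := by omega
      subst hd
      rfl

lemma build_spec (u : ℕ → ℕ → R) (i j : ℕ) :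
    build u i j = solveE (build u) i j (u i j) := by
  have h1 : build u i j = solveE (buildAux u (i + j)) i j (u i j) := by
    show (if i + j < i + j then _ else _) = _
    rw [if_neg (lt_irrefl _)]
  rw [h1]
  unfold solveE
  rw [minorDet_congr (buildAux u (i + j)) (build u) i j
      (fun a b _ _ hab => buildAux_stable u (i + j) a b hab),
    zeroDet_congr (buildAux u (i + j)) (build u) i j
      (fun a b _ _ hab => buildAux_stable u (i + j) a b hab)]

lemma isUnit_minorDet_of (g : ℕ → ℕ → R) (i j : ℕ)
    (h : 1 ≤ min i j → IsUnit (bsub g (i-1) (j-1)).det) :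
    IsUnit (minorDet g i j) := by
  rcases Nat.eq_zero_or_pos (min i j) with h0 | h0
  · have : IsEmpty (Fin (min i j)) := ⟨fun a => absurd a.isLt (by omega)⟩
    unfold minorDet
    rw [Matrix.det_isEmpty]
    exact isUnit_one
  · rw [minorDet_eq g (by omega) (by omega)]
    exact h h0

/-- The built matrix has the prescribed border determinants. -/
lemma build_det (u : ℕ → ℕ → R) (hu : ∀ a b, IsUnit (u a b)) :
    ∀ i j, IsUnit (minorDet (build u) i j) ∧ (bsub (build u) i j).det = u i j := by
  have key : ∀ d i j, i + j < d →
      IsUnit (minorDet (build u) i j) ∧ (bsub (build u) i j).det = u i j := by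
    intro d
    induction d with
    | zero => intro i j h; omega
    | succ d ih =>
      intro i j h
      have hC : IsUnit (minorDet (build u) i j) := by
        apply isUnit_minorDet_of
        intro h1
        rw [(ih (i-1) (j-1) (by omega)).2]
        exact hu _ _
      refine ⟨hC, ?_⟩
      rw [det_bsub, build_spec u i j]
      unfold solveE
      rw [mul_comm (Ring.inverse _) _, mul_assoc, Ring.inverse_mul_cancel _ hC, mul_one]
      ring
  exact fun i j => key (i + j + 1) i j (by omega)

/-- Uniqueness: two functions with unit Pascal determinants agreeing in value
are equal on the rectangle. -/
lemma build_unique (g h : ℕ → ℕ → R) (n m : ℕ)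
    (hg : ∀ i j, i < n → j < m → IsUnit ((bsub g i j).det))
    (heq : ∀ i j, i < n → j < m → (bsub g i j).det = (bsub h i j).det) :
    ∀ i j, i < n → j < m → g i j = h i j := by
  have key : ∀ d i j, i + j < d → i < n → j < m → g i j = h i j := by
    intro d
    induction d with
    | zero => intro i j hd; omega
    | succ d ih =>
      intro i j hd hi hj
      have Hlow : ∀ a b, a ≤ i → b ≤ j → a + b < i + j → g a b = h a b :=
        fun a b ha hb hab => ih a b (by omega) (by omega) (by omega)
      have hC : IsUnit (minorDet g i j) := by
        apply isUnit_minorDet_of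
        intro h1
        exact hg (i-1) (j-1) (by omega) (by omega)
      have e1 := det_bsub g i j
      have e2 := det_bsub h i j
      rw [heq i j hi hj, e2, minorDet_congr g h i j Hlow, zeroDet_congr g h i j Hlow] at e1
      have e3 := add_right_cancel e1
      have hC' : IsUnit (minorDet h i j) := minorDet_congr g h i j Hlow ▸ hC
      apply hC'.mul_left_cancel
      rw [mul_comm, mul_comm (minorDet h i j)]
      exact e3.symm
  exact fun i j => key (i + j + 1) i j (by omega)



/-- A matrix padded by zeros to a function on all of `ℕ × ℕ`. -/
def pad {n m : ℕ} (M : Matrix (Fin n) (Fin m) R) : ℕ → ℕ → R :=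
  fun a b => if h : a < n ∧ b < m then M ⟨a, h.1⟩ ⟨b, h.2⟩ else 0

lemma border_eq_pad {n m : ℕ} (M : Matrix (Fin n) (Fin m) R) (i : Fin n) (j : Fin m) :
    borderSubmatrix M i j = bsub (pad M) i.1 j.1 := by
  ext a b
  simp only [borderSubmatrix, bsub, Matrix.of_apply, pad]
  rw [dif_pos ⟨by have := a.isLt; have := i.isLt; omega,
    by have := b.isLt; have := j.isLt; omega⟩]

/-- A unit-valued array padded by ones. -/
def upad {n m : ℕ} (u : Fin n → Fin m → Rˣ) : ℕ → ℕ → R :=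
  fun a b => if h : a < n ∧ b < m then (u ⟨a, h.1⟩ ⟨b, h.2⟩ : R) else 1

lemma isUnit_upad {n m : ℕ} (u : Fin n → Fin m → Rˣ) (a b : ℕ) : IsUnit (upad u a b) := by
  unfold upad
  split_ifs
  · exact Units.isUnit _
  · exact isUnit_one

/-- The Pascal-like matrix built from prescribed border determinants. -/
noncomputable def buildM {n m : ℕ} (u : Fin n → Fin m → Rˣ) : Matrix (Fin n) (Fin m) R :=
  Matrix.of fun i j => build (upad u) i.1 j.1

lemma border_buildM {n m : ℕ} (u : Fin n → Fin m → Rˣ) (i : Fin n) (j : Fin m) :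
    borderSubmatrix (buildM u) i j = bsub (build (upad u)) i.1 j.1 := rfl

lemma pascal_buildM {n m : ℕ} (u : Fin n → Fin m → Rˣ) : PascalLike (buildM u) := by
  intro i j
  rw [border_buildM, (build_det (upad u) (isUnit_upad u) i.1 j.1).2]
  exact isUnit_upad u i.1 j.1

/-- The set of Pascal-like matrices is equivalent to arrays of units. -/
noncomputable def pascalEquiv (n m : ℕ) :
    {M : Matrix (Fin n) (Fin m) R // PascalLike M} ≃ (Fin n → Fin m → Rˣ) where
  toFun M i j := (M.2 i j).unit
  invFun u := ⟨buildM u, pascal_buildM u⟩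
  left_inv := by
    rintro ⟨M, hM⟩
    apply Subtype.ext
    ext i j
    have hkey : pad M i.1 j.1 = build (upad fun i j => (hM i j).unit) i.1 j.1 := by
      apply build_unique (pad M) _ n m ?_ ?_ i.1 j.1 i.isLt j.isLt
      · intro a b ha hb
        rw [← border_eq_pad M ⟨a, ha⟩ ⟨b, hb⟩]
        exact hM ⟨a, ha⟩ ⟨b, hb⟩
      · intro a b ha hb
        rw [← border_eq_pad M ⟨a, ha⟩ ⟨b, hb⟩,
          (build_det _ (isUnit_upad _) a b).2]
        unfold upad
        rw [dif_pos ⟨ha, hb⟩, IsUnit.unit_spec]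
    have hpad : pad M i.1 j.1 = M i j := by
      unfold pad
      rw [dif_pos ⟨i.isLt, j.isLt⟩]
    show buildM (fun i j => (hM i j).unit) i j = M i j
    rw [← hpad, hkey]
    rfl
  right_inv := by
    intro u
    funext i j
    apply Units.ext
    rw [IsUnit.unit_spec, border_buildM, (build_det (upad u) (isUnit_upad u) i.1 j.1).2]
    unfold upad
    rw [dif_pos ⟨i.isLt, j.isLt⟩]

end PascalAux

theorem card_pascalLike (R : Type*) [CommRing R] [Finite Rˣ] (n m : ℕ) :
    {M : Matrix (Fin n) (Fin m) R | PascalLike M}.ncard = (Nat.card Rˣ) ^ (n * m) := by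
  rw [← Nat.card_coe_set_eq]
  have e : Nat.card ↑{M : Matrix (Fin n) (Fin m) R | PascalLike M}
      = Nat.card (Fin n → Fin m → Rˣ) :=
    Nat.card_congr ((Equiv.subtypeEquivRight (fun M => Iff.rfl)).trans
      (PascalAux.pascalEquiv n m))
  rw [e]
  rw [Nat.card_fun, Nat.card_fun, Nat.card_eq_fintype_card (α := Fin n),
    Nat.card_eq_fintype_card (α := Fin m), Fintype.card_fin, Fintype.card_fin,
    ← pow_mul, Nat.mul_comm]
end

section
/- Let R be a commutative ring, n, m ≥ 1, and prescribe for each (i,j) with 0 ≤ i < n, 0 ≤ j < m a unit u(i,j) ∈ R^×. Then there exists a unique matrix M ∈ R^{n×m} such that for every (i,j), the determinant of the square submatrix of M with bottom-right corner (i,j) lying on the top or left border equals u(i,j). -/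
variable {R : Type*} [CommRing R]

-- ----------------------------------------------------------------------------
-- Auxiliary lemmas
-- ----------------------------------------------------------------------------

private lemma mentry_congr {n m : ℕ} (M : Matrix (Fin n) (Fin m) R) {a a' : Fin n}
    {b b' : Fin m} (h1 : a.1 = a'.1) (h2 : b.1 = b'.1) : M a b = M a' b' := by
  rw [Fin.ext h1, Fin.ext h2]

private lemma borderSubmatrix_apply {n m : ℕ} (M : Matrix (Fin n) (Fin m) R)
    (i : Fin n) (j : Fin m) (a b : Fin (min i.1 j.1 + 1)) :
    borderSubmatrix M i j a b =
      M ⟨i.1 - min i.1 j.1 + a.1, by have := a.isLt; have := i.isLt; omega⟩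
        ⟨j.1 - min i.1 j.1 + b.1, by have := b.isLt; have := j.isLt; omega⟩ := rfl

/-- The bottom-right corner of the border submatrix is `M i j`. -/
private lemma borderSubmatrix_corner {n m : ℕ} (M : Matrix (Fin n) (Fin m) R)
    (i : Fin n) (j : Fin m) :
    borderSubmatrix M i j (Fin.last _) (Fin.last _) = M i j := by
  rw [borderSubmatrix_apply]
  exact mentry_congr M (by simp only [Fin.val_last]; omega) (by simp only [Fin.val_last]; omega)

/-- If two square matrices agree off the bottom-right corner, their determinants
differ by the difference of the corners times the corner minor. -/
private lemma det_diff_corner {s : ℕ} (A B : Matrix (Fin (s + 1)) (Fin (s + 1)) R)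
    (h : ∀ a b : Fin (s + 1), a ≠ Fin.last s ∨ b ≠ Fin.last s → A a b = B a b) :
    A.det = B.det + (A (Fin.last s) (Fin.last s) - B (Fin.last s) (Fin.last s)) *
      (A.submatrix Fin.castSucc Fin.castSucc).det := by
  have hminor : ∀ jj : Fin (s + 1),
      A.submatrix (Fin.last s).succAbove jj.succAbove
        = B.submatrix (Fin.last s).succAbove jj.succAbove := by
    intro jj
    ext a b
    simp only [Matrix.submatrix_apply]
    exact h _ _ (Or.inl (Fin.succAbove_ne _ a))
  rw [Matrix.det_succ_row A (Fin.last s), Matrix.det_succ_row B (Fin.last s),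
    Fin.sum_univ_castSucc, Fin.sum_univ_castSucc]
  have hsum : ∀ jj : Fin s,
      (-1 : R) ^ ((Fin.last s : ℕ) + ((Fin.castSucc jj : Fin (s+1)) : ℕ)) *
          A (Fin.last s) (Fin.castSucc jj) *
          (A.submatrix (Fin.last s).succAbove (Fin.castSucc jj).succAbove).det
        = (-1 : R) ^ ((Fin.last s : ℕ) + ((Fin.castSucc jj : Fin (s+1)) : ℕ)) *
          B (Fin.last s) (Fin.castSucc jj) *
          (B.submatrix (Fin.last s).succAbove (Fin.castSucc jj).succAbove).det := by
    intro jj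
    rw [hminor, h _ _ (Or.inr (by
      intro hc
      have := congrArg Fin.val hc
      simp at this
      omega))]
  have hABminor : A.submatrix Fin.castSucc Fin.castSucc = B.submatrix Fin.castSucc Fin.castSucc := by
    have := hminor (Fin.last s)
    rwa [Fin.succAbove_last] at this
  rw [Finset.sum_congr rfl fun jj _ => hsum jj, hminor (Fin.last s), Fin.succAbove_last,
    hABminor]
  have hsign : ((-1 : R)) ^ ((Fin.last s : ℕ) + (Fin.last s : ℕ)) = 1 :=
    Even.neg_one_pow ⟨(Fin.last s : ℕ), rfl⟩
  rw [hsign]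
  ring

/-- Border submatrices only depend on entries of coordinate sum at most `i + j`. -/
private lemma borderSubmatrix_eq_of_agree {n m : ℕ} {M M' : Matrix (Fin n) (Fin m) R}
    (i : Fin n) (j : Fin m)
    (h : ∀ (p : Fin n) (q : Fin m), p.1 + q.1 ≤ i.1 + j.1 → M p q = M' p q) :
    borderSubmatrix M i j = borderSubmatrix M' i j := by
  ext a b
  rw [borderSubmatrix_apply, borderSubmatrix_apply]
  apply h
  have := a.isLt; have := b.isLt
  simp only
  omega

/-- Off-corner entries of the border submatrix only depend on entries of coordinate
sum strictly less than `i + j`. -/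
private lemma borderSubmatrix_offcorner_eq {n m : ℕ} {M M' : Matrix (Fin n) (Fin m) R}
    (i : Fin n) (j : Fin m)
    (h : ∀ (p : Fin n) (q : Fin m), p.1 + q.1 < i.1 + j.1 → M p q = M' p q) :
    ∀ a b, a ≠ Fin.last (min i.1 j.1) ∨ b ≠ Fin.last (min i.1 j.1) →
      borderSubmatrix M i j a b = borderSubmatrix M' i j a b := by
  intro a b hab
  rw [borderSubmatrix_apply, borderSubmatrix_apply]
  apply h
  have ha := a.isLt; have hb := b.isLt
  have hmin : min i.1 j.1 ≤ i.1 ∧ min i.1 j.1 ≤ j.1 := ⟨min_le_left _ _, min_le_right _ _⟩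
  rcases hab with hab | hab
  · have : a.1 ≠ min i.1 j.1 := fun hh => hab (Fin.ext (by simpa using hh))
    simp only; omega
  · have : b.1 ≠ min i.1 j.1 := fun hh => hab (Fin.ext (by simpa using hh))
    simp only; omega

/-- For `min i j = 0` the border determinant is just the entry. -/
private lemma borderSubmatrix_det_min_zero {n m : ℕ} (M : Matrix (Fin n) (Fin m) R)
    (i : Fin n) (j : Fin m) (h : min i.1 j.1 = 0) :
    (borderSubmatrix M i j).det = M i j := by
  haveI : Unique (Fin (min i.1 j.1 + 1)) :=
    ⟨⟨⟨0, by omega⟩⟩, fun a => Fin.ext (by have := a.isLt; omega)⟩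
  rw [Matrix.det_unique, borderSubmatrix_apply]
  exact mentry_congr M (by simp only [default]; omega) (by simp only [default]; omega)

/-- The corner minor of the border submatrix at `(i, j)` is the border submatrix at
`(i-1, j-1)` (when `min i j ≥ 1`). -/
private lemma borderSubmatrix_minor_det {n m : ℕ} (M : Matrix (Fin n) (Fin m) R)
    (i : Fin n) (j : Fin m) (hs : 0 < min i.1 j.1) :
    ((borderSubmatrix M i j).submatrix Fin.castSucc Fin.castSucc).det
      = (borderSubmatrix M ⟨i.1 - 1, by have := i.isLt; omega⟩
          ⟨j.1 - 1, by have := j.isLt; omega⟩).det := by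
  set i' : Fin n := ⟨i.1 - 1, by have := i.isLt; omega⟩
  set j' : Fin m := ⟨j.1 - 1, by have := j.isLt; omega⟩
  have hsz : min i.1 j.1 = min i'.1 j'.1 + 1 := by simp only [i', j']; omega
  rw [← Matrix.det_submatrix_equiv_self (finCongr hsz) (borderSubmatrix M i' j')]
  congr 1
  ext a b
  simp only [Matrix.submatrix_apply, borderSubmatrix_apply, finCongr_apply, Fin.coe_cast,
    Fin.coe_castSucc]
  apply mentry_congr
  · have := a.isLt
    have h1 : min i.1 j.1 ≤ i.1 := min_le_left _ _
    simp only [i', j']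
    omega
  · have := b.isLt
    have h1 : min i.1 j.1 ≤ j.1 := min_le_right _ _
    simp only [i', j']
    omega

/-- The corner minor determinant is a unit, given prescribed previous determinants. -/
private lemma minor_det_isUnit {n m : ℕ} (u : Fin n → Fin m → Rˣ)
    (M : Matrix (Fin n) (Fin m) R) (i : Fin n) (j : Fin m)
    (hdets : ∀ (p : Fin n) (q : Fin m), p.1 + q.1 < i.1 + j.1 →
      (borderSubmatrix M p q).det = (u p q : R)) :
    IsUnit ((borderSubmatrix M i j).submatrix Fin.castSucc Fin.castSucc).det := by
  rcases Nat.eq_zero_or_pos (min i.1 j.1) with h | h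
  · haveI : IsEmpty (Fin (min i.1 j.1)) := ⟨fun a => by have := a.isLt; omega⟩
    rw [Matrix.det_isEmpty]
    exact isUnit_one
  · rw [borderSubmatrix_minor_det M i j h]
    rw [hdets _ _ (by simp only; omega)]
    exact (u _ _).isUnit

/-- Uniqueness. -/
private lemma pascal_unique {n m : ℕ} (u : Fin n → Fin m → Rˣ)
    (M M' : Matrix (Fin n) (Fin m) R)
    (hM : ∀ (i : Fin n) (j : Fin m), (borderSubmatrix M i j).det = (u i j : R))
    (hM' : ∀ (i : Fin n) (j : Fin m), (borderSubmatrix M' i j).det = (u i j : R)) :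
    M = M' := by
  have key : ∀ k : ℕ, ∀ (i : Fin n) (j : Fin m), i.1 + j.1 = k → M i j = M' i j := by
    intro k
    induction k using Nat.strong_induction_on with
    | _ k IH =>
      intro i j hk
      have hoff : ∀ a b, a ≠ Fin.last (min i.1 j.1) ∨ b ≠ Fin.last (min i.1 j.1) →
          borderSubmatrix M i j a b = borderSubmatrix M' i j a b :=
        borderSubmatrix_offcorner_eq i j (fun p q hpq => IH _ (by omega) p q rfl)
      have hdd := det_diff_corner (borderSubmatrix M i j) (borderSubmatrix M' i j) hoff
      rw [hM, hM', borderSubmatrix_corner, borderSubmatrix_corner] at hdd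
      have h0 : (M i j - M' i j) *
          ((borderSubmatrix M i j).submatrix Fin.castSucc Fin.castSucc).det = 0 := by
        linear_combination -hdd
      have hu : IsUnit ((borderSubmatrix M i j).submatrix Fin.castSucc Fin.castSucc).det :=
        minor_det_isUnit u M i j (fun p q _ => hM p q)
      exact sub_eq_zero.mp ((hu.mul_left_eq_zero).mp h0)
  ext i j
  exact key _ i j rfl

/-- Existence, by induction on the anti-diagonal. -/
private lemma pascal_exists_partial {n m : ℕ} (u : Fin n → Fin m → Rˣ) :
    ∀ N : ℕ, ∃ M : Matrix (Fin n) (Fin m) R,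
      ∀ (i : Fin n) (j : Fin m), i.1 + j.1 < N → (borderSubmatrix M i j).det = (u i j : R) := by
  intro N
  induction N with
  | zero => exact ⟨0, fun i j h => absurd h (by omega)⟩
  | succ N ihN =>
    obtain ⟨M, hM⟩ := ihN
    set M' : Matrix (Fin n) (Fin m) R := Matrix.of fun i j =>
      if i.1 + j.1 = N then
        M i j + ((u i j : R) - (borderSubmatrix M i j).det) *
          Ring.inverse (((borderSubmatrix M i j).submatrix Fin.castSucc Fin.castSucc).det)
      else M i j with hM'def
    have hagree : ∀ (p : Fin n) (q : Fin m), p.1 + q.1 < N → M' p q = M p q := by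
      intro p q hpq
      simp only [hM'def, Matrix.of_apply]
      rw [if_neg (by omega)]
    refine ⟨M', fun i j hij => ?_⟩
    rcases Nat.lt_or_ge (i.1 + j.1) N with h | h
    · rw [borderSubmatrix_eq_of_agree i j (fun p q hpq => hagree p q (by omega))]
      exact hM i j h
    · have hN : i.1 + j.1 = N := by omega
      have hoff : ∀ a b, a ≠ Fin.last (min i.1 j.1) ∨ b ≠ Fin.last (min i.1 j.1) →
          borderSubmatrix M' i j a b = borderSubmatrix M i j a b :=
        borderSubmatrix_offcorner_eq i j (fun p q hpq => hagree p q (by omega))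
      have hdd := det_diff_corner (borderSubmatrix M' i j) (borderSubmatrix M i j) hoff
      rw [borderSubmatrix_corner, borderSubmatrix_corner] at hdd
      -- the minors of `M'` and `M` agree
      have hminor : (borderSubmatrix M' i j).submatrix Fin.castSucc Fin.castSucc
          = (borderSubmatrix M i j).submatrix Fin.castSucc Fin.castSucc := by
        ext a b
        simp only [Matrix.submatrix_apply]
        apply hoff
        left
        intro hc
        have := congrArg Fin.val hc
        simp [Fin.val_last] at this
        have := a.isLt
        omega
      have hu : IsUnit ((borderSubmatrix M i j).submatrix Fin.castSucc Fin.castSucc).det :=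
        minor_det_isUnit u M i j (fun p q hpq => hM p q (by omega))
      have hcorner : M' i j = M i j + ((u i j : R) - (borderSubmatrix M i j).det) *
          Ring.inverse (((borderSubmatrix M i j).submatrix Fin.castSucc Fin.castSucc).det) := by
        simp only [hM'def, Matrix.of_apply]
        rw [if_pos hN]
      rw [hminor, hcorner] at hdd
      rw [hdd]
      have hinv := Ring.inverse_mul_cancel _ hu
      linear_combination ((u i j : R) - (borderSubmatrix M i j).det) * hinv
  -- end

theorem existsUnique_pascalLike_of_prescribed_dets (R : Type*) [CommRing R]
    (n m : ℕ) (hn : 1 ≤ n) (hm : 1 ≤ m) (u : Fin n → Fin m → Rˣ) :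
    ∃! M : Matrix (Fin n) (Fin m) R,
      ∀ (i : Fin n) (j : Fin m), (borderSubmatrix M i j).det = (u i j : R) := by
  obtain ⟨M, hM⟩ := pascal_exists_partial u (n + m)
  refine ⟨M, fun i j => hM i j (by have := i.isLt; have := j.isLt; omega), ?_⟩
  intro M' hM'
  exact pascal_unique u M' M hM' (fun i j => hM i j (by have := i.isLt; have := j.isLt; omega))
end

section
/- There are exactly 2^{nm} Pascal-like matrices in ℤ^{n×m}, and all of them are congruent to each other modulo 2. -/
variable {R : Type*} [CommRing R]

def dd (f : ℕ → ℕ → R) (s i j : ℕ) : R :=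
  Matrix.det (Matrix.of fun a b : Fin (s + 1) => f (i - s + a.1) (j - s + b.1))

lemma dd_zero (f : ℕ → ℕ → R) (i j : ℕ) : dd f 0 i j = f i j := by
  simp [dd, Matrix.det_fin_one]

lemma dd_congr {f g : ℕ → ℕ → R} {s i j : ℕ} (hsi : s ≤ i) (hsj : s ≤ j)
    (h : ∀ a b, a ≤ i → b ≤ j → f a b = g a b) : dd f s i j = dd g s i j := by
  unfold dd
  congr 1
  ext a b
  exact h _ _ (by omega) (by omega)

lemma dd_affine {f g : ℕ → ℕ → R} {s i j : ℕ} (hsi : s + 1 ≤ i) (hsj : s + 1 ≤ j)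
    (h : ∀ a b, a ≤ i → b ≤ j → ¬(a = i ∧ b = j) → f a b = g a b) :
    dd f (s + 1) i j = dd g (s + 1) i j + (f i j - g i j) * dd g s (i - 1) (j - 1) := by
  have key : ∀ a b : Fin (s + 2), ¬(a = Fin.last (s + 1) ∧ b = Fin.last (s + 1)) →
      f (i - (s + 1) + a.1) (j - (s + 1) + b.1) = g (i - (s + 1) + a.1) (j - (s + 1) + b.1) := by
    intro a b hab
    apply h _ _ (by omega) (by omega)
    rintro ⟨h1, h2⟩
    exact hab ⟨Fin.ext (by simp only [Fin.val_last]; omega),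
      Fin.ext (by simp only [Fin.val_last]; omega)⟩
  set A : Matrix (Fin (s + 2)) (Fin (s + 2)) R :=
    Matrix.of fun a b : Fin (s + 2) => f (i - (s + 1) + a.1) (j - (s + 1) + b.1) with hA
  set B : Matrix (Fin (s + 2)) (Fin (s + 2)) R :=
    Matrix.of fun a b : Fin (s + 2) => g (i - (s + 1) + a.1) (j - (s + 1) + b.1) with hB
  have hminor : ∀ c : Fin (s + 2),
      (A.submatrix (Fin.last (s + 1)).succAbove c.succAbove).det =
      (B.submatrix (Fin.last (s + 1)).succAbove c.succAbove).det := by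
    intro c
    congr 1
    ext a b
    simp only [Matrix.submatrix_apply, hA, hB, Matrix.of_apply]
    exact key _ _ (fun hh => (Fin.succAbove_ne _ a) hh.1)
  have hlastminor : (B.submatrix (Fin.last (s + 1)).succAbove
      (Fin.last (s + 1)).succAbove).det = dd g s (i - 1) (j - 1) := by
    rw [dd]
    congr 1
    ext a b
    simp only [Matrix.submatrix_apply, hB, Matrix.of_apply, Fin.succAbove_last,
      Fin.coe_castSucc]
    congr 1 <;> omega
  have hent : ∀ c : Fin (s + 2), c ≠ Fin.last (s + 1) →
      A (Fin.last (s + 1)) c = B (Fin.last (s + 1)) c := by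
    intro c hc
    simp only [hA, hB, Matrix.of_apply]
    exact key _ _ (fun hh => hc hh.2)
  have hAll : A (Fin.last (s + 1)) (Fin.last (s + 1)) = f i j := by
    simp only [hA, Matrix.of_apply, Fin.val_last]
    congr 1 <;> omega
  have hBll : B (Fin.last (s + 1)) (Fin.last (s + 1)) = g i j := by
    simp only [hB, Matrix.of_apply, Fin.val_last]
    congr 1 <;> omega
  have hd : dd f (s + 1) i j = A.det := rfl
  have hd' : dd g (s + 1) i j = B.det := rfl
  rw [hd, hd', Matrix.det_succ_row A (Fin.last (s + 1)),
    Matrix.det_succ_row B (Fin.last (s + 1))]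
  have : ∀ c : Fin (s + 2),
      (-1 : R) ^ ((Fin.last (s + 1) : Fin (s+2)).1 + c.1) * A (Fin.last (s + 1)) c *
        (A.submatrix (Fin.last (s + 1)).succAbove c.succAbove).det =
      (-1 : R) ^ ((Fin.last (s + 1) : Fin (s+2)).1 + c.1) * B (Fin.last (s + 1)) c *
        (B.submatrix (Fin.last (s + 1)).succAbove c.succAbove).det +
      (if c = Fin.last (s + 1) then (f i j - g i j) * dd g s (i - 1) (j - 1) else 0) := by
    intro c
    by_cases hc : c = Fin.last (s + 1)
    · subst hc
      rw [if_pos rfl, hminor, hAll, hBll, hlastminor]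
      have hev : (-1 : R) ^ ((Fin.last (s + 1) : Fin (s+2)).1 + (Fin.last (s+1) : Fin (s+2)).1)
          = 1 := Even.neg_one_pow ⟨s + 1, by simp [Fin.val_last]⟩
      rw [hev]
      ring
    · rw [if_neg hc, hminor, hent c hc, add_zero]
  rw [Finset.sum_congr rfl (fun c _ => this c), Finset.sum_add_distrib,
    Finset.sum_ite_eq' Finset.univ (Fin.last (s + 1)), if_pos (Finset.mem_univ _)]

lemma dd_unique (f g : ℕ → ℕ → R) (n m : ℕ)
    (hu : ∀ i < n, ∀ j < m, IsUnit (dd g (min i j) i j))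
    (he : ∀ i < n, ∀ j < m, dd f (min i j) i j = dd g (min i j) i j) :
    ∀ i < n, ∀ j < m, f i j = g i j := by
  suffices H : ∀ k, ∀ i < n, ∀ j < m, i + j = k → f i j = g i j by
    intro i hi j hj; exact H (i + j) i hi j hj rfl
  intro k
  induction k using Nat.strong_induction_on with
  | _ k IH =>
    intro i hi j hj hk
    rcases Nat.eq_zero_or_pos (min i j) with hmin | hmin
    · have := he i hi j hj
      rw [hmin, dd_zero, dd_zero] at this
      exact this
    · obtain ⟨s, hs⟩ : ∃ s, min i j = s + 1 := ⟨min i j - 1, by omega⟩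
      set f' : ℕ → ℕ → R := fun a b => if a = i ∧ b = j then f i j else g a b with hf'
      have hff' : dd f (min i j) i j = dd f' (min i j) i j := by
        apply dd_congr (by omega) (by omega)
        intro a b ha hb
        by_cases hab : a = i ∧ b = j
        · obtain ⟨rfl, rfl⟩ := hab
          simp [hf']
        · simp only [hf', if_neg hab]
          exact IH (a + b) (by omega) a (by omega) b (by omega) rfl
      have haff : dd f' (min i j) i j =
          dd g (min i j) i j + (f' i j - g i j) * dd g s (i - 1) (j - 1) := by
        rw [hs]
        exact dd_affine (by omega) (by omega)
          (fun a b ha hb hab => by simp only [hf', if_neg hab])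
      have hz : (f i j - g i j) * dd g s (i - 1) (j - 1) = 0 := by
        have h1 := he i hi j hj
        have : f' i j = f i j := by simp [hf']
        rw [hff', haff, this] at h1
        linear_combination h1
      have hmin' : min (i - 1) (j - 1) = s := by omega
      have hu' := hu (i - 1) (by omega) (j - 1) (by omega)
      rw [hmin'] at hu'
      exact sub_eq_zero.mp ((IsUnit.mul_left_eq_zero hu').mp hz)

def solveAux (ε : ℕ → ℕ → ℤˣ) (i j : ℕ) : ℤ :=
  if min i j = 0 then (ε i j : ℤ)
  else ((ε i j : ℤ) -
      dd (fun a b => if h : a + b < i + j then solveAux ε a b else 0) (min i j) i j) *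
    (ε (i - 1) (j - 1) : ℤ)
termination_by i + j
decreasing_by exact h

lemma dd_solveAux (ε : ℕ → ℕ → ℤˣ) (i j : ℕ) :
    dd (solveAux ε) (min i j) i j = (ε i j : ℤ) := by
  suffices H : ∀ k i j, i + j = k → dd (solveAux ε) (min i j) i j = (ε i j : ℤ) by
    exact H (i + j) i j rfl
  intro k
  induction k using Nat.strong_induction_on with
  | _ k IH =>
    intro i j hk
    rcases Nat.eq_zero_or_pos (min i j) with hmin | hmin
    · rw [hmin, dd_zero, solveAux, if_pos hmin]
    · obtain ⟨s, hs⟩ : ∃ s, min i j = s + 1 := ⟨min i j - 1, by omega⟩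
      set p : ℕ → ℕ → ℤ := fun a b => if h : a + b < i + j then solveAux ε a b else 0 with hp
      have hsol : solveAux ε i j = ((ε i j : ℤ) - dd p (min i j) i j) * (ε (i-1) (j-1) : ℤ) := by
        conv_lhs => rw [solveAux]
        rw [if_neg (by omega)]
      have haff : dd (solveAux ε) (min i j) i j =
          dd p (min i j) i j + (solveAux ε i j - p i j) * dd p s (i - 1) (j - 1) := by
        rw [hs]
        apply dd_affine (by omega) (by omega)
        intro a b ha hb hab
        rw [hp]
        simp only [dif_pos (show a + b < i + j by omega)]
      have hpz : p i j = 0 := by simp [hp]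
      have hps : dd p s (i - 1) (j - 1) = dd (solveAux ε) s (i - 1) (j - 1) := by
        apply dd_congr (by omega) (by omega)
        intro a b ha hb
        rw [hp]; simp only [dif_pos (show a + b < i + j by omega)]
      have hds : dd (solveAux ε) s (i - 1) (j - 1) = (ε (i - 1) (j - 1) : ℤ) := by
        have := IH ((i - 1) + (j - 1)) (by omega) (i - 1) (j - 1) rfl
        rwa [show min (i - 1) (j - 1) = s by omega] at this
      rw [haff, hpz, hsol, hps, hds, sub_zero]
      have : (ε (i - 1) (j - 1) : ℤ) * (ε (i - 1) (j - 1) : ℤ) = 1 := by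
        rw [← Units.val_mul, Int.units_mul_self _, Units.val_one]
      calc dd p (min i j) i j + ((ε i j : ℤ) - dd p (min i j) i j) *
            (ε (i-1) (j-1) : ℤ) * (ε (i-1) (j-1) : ℤ)
          = dd p (min i j) i j + ((ε i j : ℤ) - dd p (min i j) i j) *
            ((ε (i-1) (j-1) : ℤ) * (ε (i-1) (j-1) : ℤ)) := by ring
        _ = (ε i j : ℤ) := by rw [this]; ring

def extM {n m : ℕ} (M : Matrix (Fin n) (Fin m) R) : ℕ → ℕ → R :=
  fun a b => if h : a < n ∧ b < m then M ⟨a, h.1⟩ ⟨b, h.2⟩ else 0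

lemma bS_det {n m : ℕ} (M : Matrix (Fin n) (Fin m) R) (i : Fin n) (j : Fin m) :
    (borderSubmatrix M i j).det = dd (extM M) (min i.1 j.1) i.1 j.1 := by
  unfold borderSubmatrix dd
  congr 1
  ext a b
  have h1 : i.1 - min i.1 j.1 + a.1 < n := by have := a.isLt; have := i.isLt; omega
  have h2 : j.1 - min i.1 j.1 + b.1 < m := by have := b.isLt; have := j.isLt; omega
  simp only [Matrix.of_apply, extM, dif_pos (And.intro h1 h2)]


lemma dd_map {S : Type*} [CommRing S] (φ : R →+* S) (f : ℕ → ℕ → R) (s i j : ℕ) :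
    dd (fun a b => φ (f a b)) s i j = φ (dd f s i j) := by
  rw [dd, dd, RingHom.map_det]
  rfl

section glue

variable {n m : ℕ}

lemma extM_eq (M : Matrix (Fin n) (Fin m) R) (i : Fin n) (j : Fin m) :
    extM M i.1 j.1 = M i j := by
  simp only [extM, dif_pos (And.intro i.isLt j.isLt), Fin.eta]

/-- extension of a sign function on the rectangle to all of `ℕ × ℕ`. -/
def extU (ε : Fin n → Fin m → ℤˣ) : ℕ → ℕ → ℤˣ :=
  fun a b => if h : a < n ∧ b < m then ε ⟨a, h.1⟩ ⟨b, h.2⟩ else 1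

lemma dd_extM_solve (ε : Fin n → Fin m → ℤˣ) (i : Fin n) (j : Fin m) :
    dd (extM (Matrix.of fun (i : Fin n) (j : Fin m) => solveAux (extU ε) i.1 j.1))
      (min i.1 j.1) i.1 j.1 = (ε i j : ℤ) := by
  have hc : dd (extM (Matrix.of fun (i : Fin n) (j : Fin m) => solveAux (extU ε) i.1 j.1))
      (min i.1 j.1) i.1 j.1 = dd (solveAux (extU ε)) (min i.1 j.1) i.1 j.1 := by
    apply dd_congr (Nat.min_le_left _ _) (Nat.min_le_right _ _)
    intro a b ha hb
    have h : a < n ∧ b < m := ⟨lt_of_le_of_lt ha i.isLt, lt_of_le_of_lt hb j.isLt⟩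
    simp only [extM, dif_pos h, Matrix.of_apply]
  rw [hc, dd_solveAux]
  simp only [extU, dif_pos (And.intro i.isLt j.isLt), Fin.eta]

end glue

theorem pascalLike_int (n m : ℕ) :
    {M : Matrix (Fin n) (Fin m) ℤ | PascalLike M}.ncard = 2 ^ (n * m) ∧
    ∀ M N : Matrix (Fin n) (Fin m) ℤ, PascalLike M → PascalLike N →
      ∀ (i : Fin n) (j : Fin m), M i j % 2 = N i j % 2 := by
  constructor
  · -- counting
    have e : ↥{M : Matrix (Fin n) (Fin m) ℤ | PascalLike M} ≃ (Fin n → Fin m → ℤˣ) := by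
      refine
        { toFun := fun M i j => (M.2 i j).unit
          invFun := fun ε =>
            ⟨Matrix.of fun i j => solveAux (extU ε) i.1 j.1, ?_⟩
          left_inv := ?_
          right_inv := ?_ }
      · intro i j
        rw [bS_det, dd_extM_solve]
        exact (ε i j).isUnit
      · rintro ⟨M, hM⟩
        ext i j
        simp only [Matrix.of_apply]
        have key := dd_unique (solveAux (extU fun i j => (hM i j).unit)) (extM M) n m
          (fun a ha b hb => by
            rw [← bS_det M ⟨a, ha⟩ ⟨b, hb⟩]; exact hM _ _)
          (fun a ha b hb => by
            rw [dd_solveAux, ← bS_det M ⟨a, ha⟩ ⟨b, hb⟩]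
            simp only [extU, dif_pos (And.intro ha hb)]
            exact ((hM ⟨a, ha⟩ ⟨b, hb⟩).unit_spec))
        have := key i.1 i.isLt j.1 j.isLt
        rwa [extM_eq] at this
      · intro ε
        funext i j
        apply Units.ext
        rw [IsUnit.unit_spec, bS_det, dd_extM_solve]
    rw [← Nat.card_coe_set_eq, Nat.card_congr e]
    simp only [Nat.card_eq_fintype_card, Fintype.card_fun, Fintype.card_units_int,
      Fintype.card_fin, ← pow_mul, mul_comm]
  · -- mod 2
    intro M N hM hN i j
    set φ : ℤ →+* ZMod 2 := Int.castRingHom (ZMod 2) with hφ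
    have hone : ∀ x : ZMod 2, x ≠ 0 → x = 1 := by decide
    have hunit1 : ∀ (P : Matrix (Fin n) (Fin m) ℤ), PascalLike P →
        ∀ a, a < n → ∀ b, b < m →
        dd (fun a b => φ (extM P a b)) (min a b) a b = 1 := by
      intro P hP a ha b hb
      rw [dd_map]
      apply hone
      apply IsUnit.ne_zero
      apply IsUnit.map
      rw [← bS_det P ⟨a, ha⟩ ⟨b, hb⟩]
      exact hP _ _
    have key := dd_unique (fun a b => φ (extM M a b)) (fun a b => φ (extM N a b)) n m
      (fun a ha b hb => by rw [hunit1 N hN a ha b hb]; exact isUnit_one)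
      (fun a ha b hb => by rw [hunit1 N hN a ha b hb, hunit1 M hM a ha b hb])
    have h2 := key i.1 i.isLt j.1 j.isLt
    simp only [extM_eq] at h2
    have h3 : (M i j : ZMod 2) = (N i j : ZMod 2) := h2
    have := (ZMod.intCast_eq_intCast_iff' _ _ _).mp h3
    exact_mod_cast this
end
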